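/- arXiv:1903.10399 — 4 statements merged into one kernel-verified Lean document; each statement's English description precedes it below -/
import Mathlib

section
/- (From an ε-minimizer of the dual to an ε-subgradient of the meta-objective.) Let ε ≥ 0, h ∈ ℝ^d and λ > 0. If û ∈ ℝ^n satisfies Ψ_h(û) < +∞ and Ψ_h(û) ≤ Ψ_h(u) + ε for all u ∈ ℝ^n, then the vector X_nᵀ û ∈ ℝ^d is an ε-subgradient of the meta-objective L_{Z_n} at h, i.e., L_{Z_n}(h') ≥ L_{Z_n}(h) + ⟨X_nᵀ û, h' − h⟩ − ε for all h' ∈ ℝ^d. -/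
open MeasureTheory Real
open scoped InnerProductSpace

noncomputable section

abbrev Vec (d : ℕ) := EuclideanSpace ℝ (Fin d)
abbrev Pt (d : ℕ) := Vec d × ℝ

/-- Empirical risk of `w` on the dataset `S`. -/
def empRisk {d n : ℕ} (ℓ : ℝ → ℝ → ℝ) (S : Fin n → Pt d) (w : Vec d) : ℝ :=
  (n : ℝ)⁻¹ * ∑ k, ℓ (⟪(S k).1, w⟫_ℝ) ((S k).2)

/-- Biased regularized empirical risk. -/
def regRisk {d n : ℕ} (ℓ : ℝ → ℝ → ℝ) (lam : ℝ) (S : Fin n → Pt d)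
    (h w : Vec d) : ℝ :=
  empRisk ℓ S w + lam / 2 * ‖w - h‖ ^ 2

/-- True risk of `w` under the task distribution `μ`. -/
def trueRisk {d : ℕ} (ℓ : ℝ → ℝ → ℝ) (μ : Measure (Pt d)) (w : Vec d) : ℝ :=
  ∫ z, ℓ (⟪z.1, w⟫_ℝ) (z.2) ∂μ

/-- `u` is a subgradient of `f : ℝ → ℝ` at `a`. -/
def IsSubgradAt (f : ℝ → ℝ) (u a : ℝ) : Prop :=
  ∀ b, f a + u * (b - a) ≤ f b

/-- Fenchel conjugate of `b ↦ ℓ(b, y)`, with values in `(-∞, +∞]` (modeled by `EReal`). -/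
def lconj (ℓ : ℝ → ℝ → ℝ) (y a : ℝ) : EReal :=
  ⨆ b : ℝ, ((a * b - ℓ b y : ℝ) : EReal)

/-- The dual objective `Ψ_h(u) = g*(u) + ‖X_nᵀ u‖²/(2λ) - ⟨X_n h, u⟩`, where
`g*(u) = (1/n) Σ_k ℓ_k*(n u_k)`. -/
def dualObj {d n : ℕ} (ℓ : ℝ → ℝ → ℝ) (lam : ℝ) (S : Fin n → Pt d)
    (h : Vec d) (u : Fin n → ℝ) : EReal :=
  (((n : ℝ)⁻¹ : ℝ) : EReal) * (∑ k, lconj ℓ ((S k).2) ((n : ℝ) * u k))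
    + ((‖∑ k, u k • (S k).1‖ ^ 2 / (2 * lam)
        - ∑ k, u k * (⟪(S k).1, h⟫_ℝ) : ℝ) : EReal)

set_option maxHeartbeats 1000000

lemma onedim (f : ℝ → ℝ) (hf : ConvexOn ℝ Set.univ f) (b : ℝ) :
    ∃ A B : ℝ, A ≤ B ∧
      (∀ s, A ≤ s → s ≤ B → ∀ z, f b + s * (z - b) ≤ f z) ∧
      (∀ c δ : ℝ, 0 < δ → ∃ t0 : ℝ, 0 < t0 ∧ ∀ t, 0 < t → t ≤ t0 →
        (f (b + t * c) - f b) / t ≤ max (A * c) (B * c) + δ) := by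
  set sl : ℝ → ℝ := fun x => (f x - f b) / (x - b) with hsl
  have mono : ∀ x y : ℝ, x ≠ b → y ≠ b → x ≤ y → sl x ≤ sl y := fun x y hx hy hxy =>
    hf.secant_mono (Set.mem_univ b) (Set.mem_univ x) (Set.mem_univ y) hx hy hxy
  have hLne : (sl '' Set.Iio b).Nonempty := ⟨sl (b - 1), ⟨b - 1, by simp, rfl⟩⟩
  have hRne : (sl '' Set.Ioi b).Nonempty := ⟨sl (b + 1), ⟨b + 1, by simp, rfl⟩⟩
  have hLbdd : BddAbove (sl '' Set.Iio b) := by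
    refine ⟨sl (b + 1), ?_⟩
    rintro v ⟨x, hx, rfl⟩
    exact mono x (b + 1) (ne_of_lt hx) (by norm_num) (by simp at hx; linarith)
  have hRbdd : BddBelow (sl '' Set.Ioi b) := by
    refine ⟨sl (b - 1), ?_⟩
    rintro v ⟨y, hy, rfl⟩
    exact mono (b - 1) y (by norm_num) (ne_of_gt hy) (by simp at hy; linarith)
  set A := sSup (sl '' Set.Iio b) with hA
  set B := sInf (sl '' Set.Ioi b) with hB
  have hslA : ∀ x, x < b → sl x ≤ A := fun x hx => le_csSup hLbdd ⟨x, hx, rfl⟩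
  have hBsl : ∀ y, b < y → B ≤ sl y := fun y hy => csInf_le hRbdd ⟨y, hy, rfl⟩
  have hAle : ∀ y, b < y → A ≤ sl y := by
    intro y hy
    refine csSup_le hLne ?_
    rintro v ⟨x, hx, rfl⟩
    exact mono x y (ne_of_lt hx) (ne_of_gt hy) (by simp at hx; linarith)
  have hAB : A ≤ B := le_csInf hRne (by rintro v ⟨y, hy, rfl⟩; exact hAle y hy)
  refine ⟨A, B, hAB, ?_, ?_⟩
  · intro s hsA hsB z
    rcases lt_trichotomy z b with hz | hz | hz
    · have h1 : sl z ≤ s := le_trans (hslA z hz) hsA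
      rw [hsl] at h1
      simp only at h1
      rw [div_le_iff_of_neg (by linarith : z - b < 0)] at h1
      linarith
    · subst hz; simp
    · have h1 : s ≤ sl z := le_trans hsB (hBsl z hz)
      rw [hsl] at h1
      simp only at h1
      rw [le_div_iff₀ (by linarith : (0:ℝ) < z - b)] at h1
      linarith
  · intro c δ hδ
    rcases lt_trichotomy c 0 with hc | hc | hc
    · have hc' : (0:ℝ) < -c := by linarith
      obtain ⟨v, ⟨x, hx, rfl⟩, hv⟩ := exists_lt_of_lt_csSup hLne
        (show A - δ / (-c) < A by have : 0 < δ / (-c) := div_pos hδ hc'; linarith)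
      have hxb : x < b := hx
      refine ⟨(x - b) / c, div_pos_of_neg_of_neg (by linarith) hc, ?_⟩
      intro t ht ht0
      have htc : t * c < 0 := mul_neg_of_pos_of_neg ht hc
      have hxle : x ≤ b + t * c := by
        have := mul_le_mul_of_nonpos_right ht0 (le_of_lt hc)
        rw [div_mul_cancel₀ _ (ne_of_lt hc)] at this
        linarith
      have hlt : b + t * c < b := by linarith
      have hq : (f (b + t * c) - f b) / t = c * sl (b + t * c) := by
        rw [hsl]; simp only
        rw [show b + t * c - b = t * c by ring]
        field_simp [ne_of_gt ht, ne_of_lt hc]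
      have hmono := mono x (b + t * c) (ne_of_lt hxb) (ne_of_lt hlt) hxle
      have hbig : A - δ / (-c) < sl (b + t * c) := lt_of_lt_of_le hv hmono
      have : c * sl (b + t * c) ≤ c * (A - δ / (-c)) :=
        mul_le_mul_of_nonpos_left (le_of_lt hbig) (le_of_lt hc)
      have hmaxeq : max (A * c) (B * c) = A * c := by
        apply max_eq_left
        exact mul_le_mul_of_nonpos_right hAB (le_of_lt hc)
      rw [hq, hmaxeq]
      have hcalc : c * (A - δ / (-c)) = A * c + δ := by
        rw [div_neg, sub_neg_eq_add, mul_add, mul_div_assoc', mul_comm c δ, mul_div_assoc, div_self (ne_of_lt hc)]; ring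
      linarith
    · subst hc
      refine ⟨1, one_pos, ?_⟩
      intro t ht _
      simp [div_nonneg, le_of_lt hδ, ne_of_gt ht]
    · obtain ⟨v, ⟨y, hy, rfl⟩, hv⟩ := exists_lt_of_csInf_lt hRne
        (show B < B + δ / c by have : 0 < δ / c := div_pos hδ hc; linarith)
      have hyb : b < y := hy
      refine ⟨(y - b) / c, div_pos (by linarith) hc, ?_⟩
      intro t ht ht0
      have htc : 0 < t * c := mul_pos ht hc
      have hyge : b + t * c ≤ y := by
        have := mul_le_mul_of_nonneg_right ht0 (le_of_lt hc)
        rw [div_mul_cancel₀ _ (ne_of_gt hc)] at this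
        linarith
      have hgt : b < b + t * c := by linarith
      have hq : (f (b + t * c) - f b) / t = c * sl (b + t * c) := by
        rw [hsl]; simp only
        rw [show b + t * c - b = t * c by ring]
        field_simp [ne_of_gt ht, ne_of_gt hc]
      have hmono := mono (b + t * c) y (ne_of_gt hgt) (ne_of_gt hyb) hyge
      have hsmall : sl (b + t * c) < B + δ / c := lt_of_le_of_lt hmono hv
      have : c * sl (b + t * c) ≤ c * (B + δ / c) :=
        mul_le_mul_of_nonneg_left (le_of_lt hsmall) (le_of_lt hc)
      have hmaxeq : max (A * c) (B * c) = B * c := by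
        apply max_eq_right
        exact mul_le_mul_of_nonneg_right hAB (le_of_lt hc)
      rw [hq, hmaxeq]
      have hcalc : c * (B + δ / c) = B * c + δ := by
        field_simp
      linarith


lemma combo {d n : ℕ} (x : Fin n → Vec d) (A B : Fin n → ℝ) (hAB : ∀ k, A k ≤ B k)
    (v : Vec d)
    (hdir : ∀ e : Vec d, ⟪e, v⟫_ℝ ≤ ∑ k, max (A k * ⟪x k, e⟫_ℝ) (B k * ⟪x k, e⟫_ℝ)) :
    ∃ s : Fin n → ℝ, (∀ k, A k ≤ s k ∧ s k ≤ B k) ∧ ∑ k, s k • x k = v := by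
  set Tl : (Fin n → ℝ) →ₗ[ℝ] Vec d :=
    { toFun := fun s => ∑ k, s k • x k
      map_add' := by intro a b; simp [add_smul, Finset.sum_add_distrib]
      map_smul' := by intro m a; simp [smul_smul, Finset.smul_sum] } with hTl
  set box : Set (Fin n → ℝ) := Set.pi Set.univ (fun k => Set.Icc (A k) (B k)) with hbox
  have hTcont : Continuous Tl := by
    show Continuous fun s : Fin n → ℝ => ∑ k, s k • x k
    apply continuous_finset_sum
    intro k _
    exact (continuous_apply k).smul continuous_const
  have hKconv : Convex ℝ (Tl '' box) :=
    (convex_pi fun k _ => convex_Icc (A k) (B k)).linear_image Tl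
  have hKcomp : IsCompact (Tl '' box) :=
    ((isCompact_univ_pi fun k => isCompact_Icc)).image hTcont
  by_cases hv : v ∈ Tl '' box
  · obtain ⟨s, hs, hTs⟩ := hv
    exact ⟨s, fun k => (hs k (Set.mem_univ k) : _), hTs⟩
  · exfalso
    obtain ⟨f, u, hfK, hfv⟩ :=
      geometric_hahn_banach_closed_point hKconv hKcomp.isClosed hv
    set e := (InnerProductSpace.toDual ℝ (Vec d)).symm f with he
    have heapp : ∀ z : Vec d, ⟪e, z⟫_ℝ = f z := fun z =>
      InnerProductSpace.toDual_symm_apply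
    set s : Fin n → ℝ := fun k => if 0 ≤ ⟪x k, e⟫_ℝ then B k else A k with hs
    have hsbox : s ∈ box := by
      intro k _
      by_cases h0 : 0 ≤ ⟪x k, e⟫_ℝ <;>
        simp only [hs, h0, if_true, if_false, Set.mem_Icc] <;>
        exact ⟨by simp [hAB k], by simp [hAB k]⟩
    have hfT : f (Tl s) = ∑ k, s k * ⟪x k, e⟫_ℝ := by
      rw [← heapp]
      show ⟪e, ∑ k, s k • x k⟫_ℝ = _
      rw [inner_sum]
      congr 1; funext k
      rw [real_inner_smul_right, real_inner_comm]
    have hmax : ∀ k, s k * ⟪x k, e⟫_ℝ = max (A k * ⟪x k, e⟫_ℝ) (B k * ⟪x k, e⟫_ℝ) := by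
      intro k
      by_cases h0 : 0 ≤ ⟪x k, e⟫_ℝ
      · simp only [hs, h0, if_true]
        exact (max_eq_right (mul_le_mul_of_nonneg_right (hAB k) h0)).symm
      · push_neg at h0
        simp only [hs, h0.not_ge, if_false]
        exact (max_eq_left (mul_le_mul_of_nonpos_right (hAB k) h0.le)).symm
    have h1 : ⟪e, v⟫_ℝ ≤ f (Tl s) := by
      rw [hfT]
      calc ⟪e, v⟫_ℝ ≤ ∑ k, max (A k * ⟪x k, e⟫_ℝ) (B k * ⟪x k, e⟫_ℝ) := hdir e
        _ = ∑ k, s k * ⟪x k, e⟫_ℝ := by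
            refine Finset.sum_congr rfl fun k _ => (hmax k).symm
    have h2 : f (Tl s) < u := hfK _ ⟨s, hsbox, rfl⟩
    have h3 : u < ⟪e, v⟫_ℝ := by rw [heapp]; exact hfv
    linarith


lemma empRisk_nonneg {d n : ℕ} (ℓ : ℝ → ℝ → ℝ) (S : Fin n → Pt d)
    (h0 : ∀ k a, 0 ≤ ℓ a ((S k).2)) (w : Vec d) : 0 ≤ empRisk ℓ S w := by
  unfold empRisk
  apply mul_nonneg (by positivity)
  exact Finset.sum_nonneg fun k _ => h0 k _

lemma regRisk_nonneg {d n : ℕ} (ℓ : ℝ → ℝ → ℝ) (lam : ℝ) (hlam : 0 < lam)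
    (S : Fin n → Pt d) (h0 : ∀ k a, 0 ≤ ℓ a ((S k).2)) (h w : Vec d) :
    0 ≤ regRisk ℓ lam S h w := by
  unfold regRisk
  have := empRisk_nonneg ℓ S h0 w
  positivity

lemma regRisk_continuous {d n : ℕ} (ℓ : ℝ → ℝ → ℝ) (lam : ℝ)
    (S : Fin n → Pt d) (hconv : ∀ k, ConvexOn ℝ Set.univ fun a => ℓ a ((S k).2))
    (h : Vec d) : Continuous (regRisk ℓ lam S h) := by
  unfold regRisk empRisk
  apply Continuous.add
  · apply Continuous.mul continuous_const
    apply continuous_finset_sum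
    intro k _
    exact ((hconv k).locallyLipschitz.continuous).comp
      (Continuous.inner continuous_const continuous_id)
  · exact continuous_const.mul ((continuous_id.sub continuous_const).norm.pow 2)

open Filter in
lemma exists_min {d n : ℕ} (ℓ : ℝ → ℝ → ℝ) (lam : ℝ) (hlam : 0 < lam)
    (S : Fin n → Pt d) (h0 : ∀ k a, 0 ≤ ℓ a ((S k).2))
    (hconv : ∀ k, ConvexOn ℝ Set.univ fun a => ℓ a ((S k).2))
    (h : Vec d) : ∃ w : Vec d, ∀ w', regRisk ℓ lam S h w ≤ regRisk ℓ lam S h w' := by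
  apply (regRisk_continuous ℓ lam S hconv h).exists_forall_le
  have h1 : Tendsto (fun w : Vec d => w - h) (cocompact _) (cocompact _) :=
    le_of_eq (Homeomorph.subRight h).map_cocompact
  have h2 : Tendsto (fun w : Vec d => ‖w - h‖) (cocompact _) atTop :=
    tendsto_norm_cocompact_atTop.comp h1
  have h3 : Tendsto (fun t : ℝ => lam / 2 * t ^ 2) atTop atTop :=
    (tendsto_pow_atTop (two_ne_zero)).const_mul_atTop (by positivity)
  refine tendsto_atTop_mono ?_ (h3.comp h2)
  intro w
  simp only [Function.comp_apply]
  unfold regRisk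
  have := empRisk_nonneg ℓ S h0 w
  linarith


lemma ereal_coe_sum {n : ℕ} (f : Fin n → ℝ) :
    ((∑ k, f k : ℝ) : EReal) = ∑ k, ((f k : ℝ) : EReal) :=
  map_sum (⟨⟨Real.toEReal, EReal.coe_zero⟩, EReal.coe_add⟩ : ℝ →+ EReal) f Finset.univ

lemma lconj_lower (ℓ : ℝ → ℝ → ℝ) (y a b : ℝ) :
    ((a * b - ℓ b y : ℝ) : EReal) ≤ lconj ℓ y a :=
  le_iSup (fun b : ℝ => ((a * b - ℓ b y : ℝ) : EReal)) b

lemma lconj_of_subgrad (ℓ : ℝ → ℝ → ℝ) (y s b0 : ℝ)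
    (hsub : ∀ z, ℓ b0 y + s * (z - b0) ≤ ℓ z y) :
    lconj ℓ y s = ((s * b0 - ℓ b0 y : ℝ) : EReal) := by
  apply le_antisymm
  · apply iSup_le
    intro b
    apply EReal.coe_le_coe_iff.2
    have := hsub b
    linarith
  · exact lconj_lower ℓ y s b0

lemma mul_coe_le (r x : ℝ) (hr : 0 < r) (X : EReal) (hX : (x : EReal) ≤ X) :
    ((r * x : ℝ) : EReal) ≤ (r : EReal) * X := by
  induction X using EReal.rec with
  | bot => simp at hX
  | coe y =>
      rw [← EReal.coe_mul]
      exact EReal.coe_le_coe_iff.2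
        (mul_le_mul_of_nonneg_left (EReal.coe_le_coe_iff.1 hX) hr.le)
  | top => rw [EReal.coe_mul_top_of_pos hr]; exact le_top

lemma ereal_sum_ne_bot {n : ℕ} (f : Fin n → EReal) (hf : ∀ k, f k ≠ ⊥) :
    ∑ k, f k ≠ ⊥ := by
  have : ∀ (s : Finset (Fin n)), ⊥ < ∑ k ∈ s, f k := by
    intro s
    induction s using Finset.induction with
    | empty => simp
    | insert x s hx ih =>
        rw [Finset.sum_insert hx]
        exact EReal.bot_lt_add_iff.2 ⟨(hf _).bot_lt, ih⟩
  exact (this Finset.univ).ne'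

lemma weak_duality {d n : ℕ} (ℓ : ℝ → ℝ → ℝ) (lam : ℝ) (hlam : 0 < lam)
    (hn : 1 ≤ n) (S : Fin n → Pt d) (h'' : Vec d) (u : Fin n → ℝ) (w : Vec d) :
    ((- regRisk ℓ lam S h'' w : ℝ) : EReal) ≤ dualObj ℓ lam S h'' u := by
  have hn0 : (n : ℝ) ≠ 0 := Nat.cast_ne_zero.2 (by omega)
  set P : Vec d := ∑ k, u k • (S k).1 with hP
  set Q : ℝ := ‖P‖ ^ 2 / (2 * lam) - ∑ k, u k * (⟪(S k).1, h''⟫_ℝ) with hQ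
  set rk : Fin n → ℝ := fun k =>
    ((n : ℝ) * u k) * ⟪(S k).1, w⟫_ℝ - ℓ (⟪(S k).1, w⟫_ℝ) ((S k).2) with hrk
  have step1 : (((n : ℝ)⁻¹ * ∑ k, rk k : ℝ) : EReal)
      ≤ (((n : ℝ)⁻¹ : ℝ) : EReal) * ∑ k, lconj ℓ ((S k).2) ((n : ℝ) * u k) := by
    apply mul_coe_le _ _ (by positivity)
    rw [ereal_coe_sum]
    exact Finset.sum_le_sum fun k _ => lconj_lower ℓ ((S k).2) ((n : ℝ) * u k) _
  have step2 : (- regRisk ℓ lam S h'' w : ℝ) ≤ (n : ℝ)⁻¹ * ∑ k, rk k + Q := by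
    have hsum : (n : ℝ)⁻¹ * ∑ k, rk k
        = (∑ k, u k * ⟪(S k).1, w⟫_ℝ) - empRisk ℓ S w := by
      rw [hrk]
      unfold empRisk
      rw [Finset.mul_sum, Finset.mul_sum, ← Finset.sum_sub_distrib]
      congr 1; funext k
      field_simp
    have hPw : ∑ k, u k * ⟪(S k).1, w⟫_ℝ = ⟪P, w⟫_ℝ := by
      rw [hP, sum_inner]
      congr 1; funext k
      rw [real_inner_smul_left]
    have hPh : ∑ k, u k * ⟪(S k).1, h''⟫_ℝ = ⟪P, h''⟫_ℝ := by
      rw [hP, sum_inner]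
      congr 1; funext k
      rw [real_inner_smul_left]
    have sq : (0:ℝ) ≤ ‖P + lam • (w - h'')‖ ^ 2 := by positivity
    have hexp : ‖P + lam • (w - h'')‖ ^ 2
        = ‖P‖ ^ 2 + 2 * (lam * (⟪P, w⟫_ℝ - ⟪P, h''⟫_ℝ)) + lam ^ 2 * ‖w - h''‖ ^ 2 := by
      rw [norm_add_sq_real, real_inner_smul_right, inner_sub_right, norm_smul]
      rw [Real.norm_eq_abs, abs_of_pos hlam]
      ring
    rw [hsum, hPw, hQ, hPh]
    unfold regRisk
    have h2l : (0:ℝ) < 2 * lam := by positivity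
    have hD : ‖P‖ ^ 2 / (2 * lam) * (2 * lam) = ‖P‖ ^ 2 :=
      div_mul_cancel₀ _ h2l.ne'
    nlinarith [sq, hexp, hD, hlam, h2l]
  calc ((- regRisk ℓ lam S h'' w : ℝ) : EReal)
      ≤ (((n : ℝ)⁻¹ * ∑ k, rk k + Q : ℝ) : EReal) := EReal.coe_le_coe_iff.2 step2
    _ = (((n : ℝ)⁻¹ * ∑ k, rk k : ℝ) : EReal) + (Q : EReal) := EReal.coe_add _ _
    _ ≤ (((n : ℝ)⁻¹ : ℝ) : EReal) * (∑ k, lconj ℓ ((S k).2) ((n : ℝ) * u k)) + (Q : EReal) :=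
        add_le_add_left step1 _
    _ = dualObj ℓ lam S h'' u := rfl


lemma strong_dual {d n : ℕ} (hn : 1 ≤ n) (ℓ : ℝ → ℝ → ℝ) (lam : ℝ) (hlam : 0 < lam)
    (S : Fin n → Pt d)
    (hconv : ∀ k, ConvexOn ℝ Set.univ fun a => ℓ a ((S k).2))
    (h wstar : Vec d)
    (hminw : ∀ w', regRisk ℓ lam S h wstar ≤ regRisk ℓ lam S h w') :
    ∃ u : Fin n → ℝ,
      dualObj ℓ lam S h u = ((- regRisk ℓ lam S h wstar : ℝ) : EReal) := by
  have hn0 : (n : ℝ) ≠ 0 := Nat.cast_ne_zero.2 (by omega)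
  have hnpos : (0:ℝ) < (n:ℝ)⁻¹ := by positivity
  haveI : Nonempty (Fin n) := ⟨⟨0, by omega⟩⟩
  set b : Fin n → ℝ := fun k => ⟪(S k).1, wstar⟫_ℝ with hb
  choose A B hAB hsub happrox using fun k => onedim _ (hconv k) (b k)
  -- main directional inequality
  have main : ∀ e : Vec d, lam * ⟪e, h - wstar⟫_ℝ
      ≤ (n : ℝ)⁻¹ * ∑ k, max (A k * ⟪(S k).1, e⟫_ℝ) (B k * ⟪(S k).1, e⟫_ℝ) := by
    intro e
    set c : Fin n → ℝ := fun k => ⟪(S k).1, e⟫_ℝ with hc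
    set IP : ℝ := ⟪e, h - wstar⟫_ℝ with hIP
    set SM : ℝ := ∑ k, max (A k * c k) (B k * c k) with hSM
    by_contra hcon
    push_neg at hcon
    set δ := (lam * IP - (n:ℝ)⁻¹ * SM) / 2 with hδdef
    have hδ : 0 < δ := by rw [hδdef]; linarith
    suffices hfin : lam * IP ≤ (n:ℝ)⁻¹ * SM + δ by
      rw [hδdef] at hfin; linarith
    choose t0 ht0pos ht0 using fun k => happrox k (c k) (δ / 2) (by linarith)
    set tcap := δ / (lam * ‖e‖ ^ 2 + 1) with htcap
    have htcappos : 0 < tcap := by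
      apply div_pos hδ; positivity
    set t := min (Finset.univ.inf' Finset.univ_nonempty t0) tcap with ht
    have htpos : 0 < t := by
      apply lt_min _ htcappos
      exact (Finset.lt_inf'_iff _).2 fun k _ => ht0pos k
    have htle : ∀ k, t ≤ t0 k := fun k =>
      le_trans (min_le_left _ _) (Finset.inf'_le _ (Finset.mem_univ k))
    -- use minimality at wstar + t • e
    have hkey := hminw (wstar + t • e)
    unfold regRisk empRisk at hkey
    have hip : ∀ k, ⟪(S k).1, wstar + t • e⟫_ℝ = b k + t * c k := by
      intro k
      rw [inner_add_right, real_inner_smul_right]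
    have hbk : ∀ k, (⟪(S k).1, wstar⟫_ℝ) = b k := fun k => rfl
    simp only [hip, hbk] at hkey
    have hnorm : ‖wstar + t • e - h‖ ^ 2
        = ‖wstar - h‖ ^ 2 + 2 * (t * (-IP)) + t ^ 2 * ‖e‖ ^ 2 := by
      rw [show wstar + t • e - h = (wstar - h) + t • e by abel]
      rw [norm_add_sq_real, real_inner_smul_right]
      rw [show (⟪wstar - h, e⟫_ℝ) = -IP by
        rw [hIP, real_inner_comm, show wstar - h = -(h - wstar) by abel, inner_neg_right]]
      rw [norm_smul, Real.norm_eq_abs, abs_of_pos htpos]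
      ring
    rw [hnorm] at hkey
    set SL : ℝ := ∑ k, ℓ (b k) ((S k).2) with hSL
    set SX : ℝ := ∑ k, ℓ (b k + t * c k) ((S k).2) with hSX
    set NE : ℝ := ‖e‖ ^ 2 with hNE
    set M : ℝ := ‖wstar - h‖ ^ 2 with hM
    -- hkey : n⁻¹ * SL + lam/2 * M ≤ n⁻¹ * SX + lam/2 * (M + 2*(t*(-IP)) + t^2*NE)
    have hterm : ∀ k, ℓ (b k + t * c k) ((S k).2) - ℓ (b k) ((S k).2)
        ≤ t * (max (A k * c k) (B k * c k) + δ / 2) := by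
      intro k
      have h1 := ht0 k t htpos (htle k)
      rw [div_le_iff₀ htpos] at h1
      linarith [h1]
    have hsumterm : SX ≤ SL + t * SM + (n:ℝ) * (t * (δ/2)) := by
      rw [hSX, hSL, hSM]
      have h1 : ∑ k, ℓ (b k + t * c k) ((S k).2)
          ≤ ∑ k, (ℓ (b k) ((S k).2) + (t * max (A k * c k) (B k * c k) + t * (δ / 2))) :=
        Finset.sum_le_sum fun k _ => by linarith [hterm k]
      refine le_trans h1 (le_of_eq ?_)
      rw [show ((n:ℝ) * (t * (δ/2))) = ∑ _k : Fin n, t * (δ/2) by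
        rw [Finset.sum_const, Finset.card_univ, Fintype.card_fin, nsmul_eq_mul]]
      rw [Finset.mul_sum, add_assoc, ← Finset.sum_add_distrib, ← Finset.sum_add_distrib]
    have hNEnn : 0 ≤ NE := by rw [hNE]; positivity
    have htcapb : t * (lam * NE) ≤ δ := by
      have h1 : t ≤ tcap := min_le_right _ _
      have h2 : t * (lam * NE) ≤ tcap * (lam * NE + 1) := by
        apply mul_le_mul h1 (by linarith) ?_ (le_of_lt htcappos)
        · positivity
      rw [htcap] at h2
      rw [div_mul_cancel₀ _ (by positivity : lam * NE + 1 ≠ 0)] at h2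
      nlinarith [htpos]
    clear_value SL SX NE M IP SM t δ tcap
    clear hterm ht0 htle hb hsub happrox hminw hip hbk hnorm hcon hδdef htcap
    have hmul' : (n:ℝ)⁻¹ * SX ≤ (n:ℝ)⁻¹ * SL + t * ((n:ℝ)⁻¹ * SM) + t * (δ/2) := by
      have h2 := mul_le_mul_of_nonneg_left hsumterm (le_of_lt hnpos)
      have h3 : (n:ℝ)⁻¹ * (SL + t * SM + (n:ℝ) * (t * (δ/2)))
          = (n:ℝ)⁻¹ * SL + t * ((n:ℝ)⁻¹ * SM) + t * (δ/2) := by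
        field_simp
      linarith [h2, h3.le, h3.ge]
    have hexp : lam / 2 * (M + 2 * (t * -IP) + t ^ 2 * NE)
        = lam / 2 * M - lam * (t * IP) + lam / 2 * (t ^ 2 * NE) := by ring
    have step : t * (lam * IP) ≤ t * ((n:ℝ)⁻¹ * SM + δ/2 + lam / 2 * (t * NE)) := by
      have hge : t * ((n:ℝ)⁻¹ * SM + δ/2 + lam / 2 * (t * NE))
          = t * ((n:ℝ)⁻¹ * SM) + t * (δ/2) + lam / 2 * (t ^ 2 * NE) := by ring
      rw [hge]
      rw [hexp] at hkey
      linarith [hkey, hmul']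
    have step2 : lam * IP ≤ (n:ℝ)⁻¹ * SM + δ/2 + lam / 2 * (t * NE) :=
      le_of_mul_le_mul_left step htpos
    nlinarith [step2, htcapb, htpos]
  -- separation / combo
  have hdir : ∀ e : Vec d, ⟪e, lam • (h - wstar)⟫_ℝ
      ≤ ∑ k, max (A k * ⟪(n:ℝ)⁻¹ • (S k).1, e⟫_ℝ) (B k * ⟪(n:ℝ)⁻¹ • (S k).1, e⟫_ℝ) := by
    intro e
    rw [real_inner_smul_right]
    refine le_trans (main e) (le_of_eq ?_)
    rw [Finset.mul_sum]
    refine Finset.sum_congr rfl fun k _ => ?_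
    rw [real_inner_smul_left, mul_max_of_nonneg _ _ (le_of_lt hnpos)]
    congr 1 <;> ring
  obtain ⟨s, hsbds, hsum⟩ := combo (fun k => (n:ℝ)⁻¹ • (S k).1) A B hAB
    (lam • (h - wstar)) hdir
  refine ⟨fun k => s k / n, ?_⟩
  have hnu : ∀ k, (n:ℝ) * (s k / n) = s k := by
    intro k; field_simp
  have hP : ∑ k, (s k / n) • (S k).1 = lam • (h - wstar) := by
    rw [← hsum]
    refine Finset.sum_congr rfl fun k _ => ?_
    rw [smul_smul, div_eq_mul_inv]
  -- lconj values
  have hlc : ∀ k, lconj ℓ ((S k).2) ((n:ℝ) * (s k / n))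
      = ((s k * b k - ℓ (b k) ((S k).2) : ℝ) : EReal) := by
    intro k
    rw [hnu k]
    exact lconj_of_subgrad ℓ ((S k).2) (s k) (b k)
      (hsub k (s k) (hsbds k).1 (hsbds k).2)
  unfold dualObj
  rw [Finset.sum_congr rfl fun k _ => hlc k]
  rw [← ereal_coe_sum, ← EReal.coe_mul, ← EReal.coe_add]
  rw [EReal.coe_eq_coe_iff]
  -- now pure real computation
  rw [hP]
  have hsb : (n : ℝ)⁻¹ * ∑ k, (s k * b k - ℓ (b k) ((S k).2))
      = (∑ k, (s k / n) * b k) - empRisk ℓ S wstar := by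
    unfold empRisk
    rw [Finset.mul_sum, Finset.mul_sum, ← Finset.sum_sub_distrib]
    refine Finset.sum_congr rfl fun k _ => ?_
    rw [show (⟪(S k).1, wstar⟫_ℝ) = b k from rfl]
    field_simp
  have hPw : ∑ k, (s k / n) * b k = ⟪lam • (h - wstar), wstar⟫_ℝ := by
    rw [← hP, sum_inner]
    refine Finset.sum_congr rfl fun k _ => ?_
    rw [real_inner_smul_left]
  have hPh : ∑ k, (s k / n) * (⟪(S k).1, h⟫_ℝ) = ⟪lam • (h - wstar), h⟫_ℝ := by
    rw [← hP, sum_inner]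
    refine Finset.sum_congr rfl fun k _ => ?_
    rw [real_inner_smul_left]
  rw [hsb, hPw, hPh]
  have hn1 : ⟪lam • (h - wstar), wstar⟫_ℝ - ⟪lam • (h - wstar), h⟫_ℝ
      = - (lam * ‖h - wstar‖ ^ 2) := by
    rw [← inner_sub_right, real_inner_smul_left]
    rw [show wstar - h = -(h - wstar) by abel, inner_neg_right]
    rw [real_inner_self_eq_norm_sq]
    ring
  have hn2 : ‖lam • (h - wstar)‖ ^ 2 = lam ^ 2 * ‖h - wstar‖ ^ 2 := by
    rw [norm_smul, Real.norm_eq_abs, abs_of_pos hlam]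
    ring
  unfold regRisk
  rw [hn2]
  rw [show ‖wstar - h‖ = ‖h - wstar‖ from norm_sub_rev _ _]
  have h2l : lam ^ 2 * ‖h - wstar‖ ^ 2 / (2 * lam) = lam / 2 * ‖h - wstar‖ ^ 2 := by
    field_simp
  linarith [hn1, h2l]


/-- From an `ε`-minimizer of the dual to an `ε`-subgradient of the
meta-objective: if `û` is an `ε`-minimizer of `Ψ_h` with `Ψ_h(û) < +∞`, then
`X_nᵀ û` is an `ε`-subgradient of `L_{Z_n}` at `h`. -/

theorem stmt9
    (d n : ℕ) (hd : 1 ≤ d) (hn : 1 ≤ n)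
    (lam : ℝ) (hlam : 0 < lam)
    (Y : Set ℝ) (ℓ : ℝ → ℝ → ℝ)
    (hℓ0 : ∀ a y, y ∈ Y → 0 ≤ ℓ a y)
    (hℓconv : ∀ y ∈ Y, ConvexOn ℝ Set.univ fun a => ℓ a y)
    (S : Fin n → Pt d) (hSY : ∀ k, (S k).2 ∈ Y)
    (h : Vec d)
    (ε : ℝ) (hε : 0 ≤ ε)
    (uhat : Fin n → ℝ)
    (hfin : dualObj ℓ lam S h uhat < ⊤)
    (hmin : ∀ u : Fin n → ℝ,
      dualObj ℓ lam S h uhat ≤ dualObj ℓ lam S h u + (ε : EReal)) :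
    ∀ h' : Vec d,
      (⨅ w : Vec d, regRisk ℓ lam S h' w)
        ≥ (⨅ w : Vec d, regRisk ℓ lam S h w)
          + (⟪∑ k, uhat k • (S k).1, h' - h⟫_ℝ) - ε := by
  intro h'
  have hℓdata : ∀ (k : Fin n) (a : ℝ), 0 ≤ ℓ a ((S k).2) := fun k a => hℓ0 a _ (hSY k)
  have hconvdata : ∀ k, ConvexOn ℝ Set.univ fun a => ℓ a ((S k).2) :=
    fun k => hℓconv _ (hSY k)
  have hn0 : (n : ℝ) ≠ 0 := Nat.cast_ne_zero.2 (by omega)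
  have hnpos : (0:ℝ) < (n:ℝ)⁻¹ := by positivity
  obtain ⟨wstar, hwstar⟩ := exists_min ℓ lam hlam S hℓdata hconvdata h
  obtain ⟨u0, hu0⟩ := strong_dual hn ℓ lam hlam S hconvdata h wstar hwstar
  -- the shared EReal part of the dual objective at uhat
  set G : EReal := (((n : ℝ)⁻¹ : ℝ) : EReal)
    * (∑ k, lconj ℓ ((S k).2) ((n : ℝ) * uhat k)) with hG
  set P : Vec d := ∑ k, uhat k • (S k).1 with hPdef
  have hQ : ∀ h'' : Vec d, dualObj ℓ lam S h'' uhat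
      = G + ((‖P‖ ^ 2 / (2 * lam) - ∑ k, uhat k * (⟪(S k).1, h''⟫_ℝ) : ℝ) : EReal) :=
    fun h'' => rfl
  -- G is a finite real
  have hSnb : (∑ k, lconj ℓ ((S k).2) ((n : ℝ) * uhat k)) ≠ ⊥ := by
    apply ereal_sum_ne_bot
    intro k
    have := lconj_lower ℓ ((S k).2) ((n : ℝ) * uhat k) 0
    exact fun hbot => by rw [hbot] at this; exact (EReal.coe_ne_bot _) (le_bot_iff.1 this)
  have hSnt : (∑ k, lconj ℓ ((S k).2) ((n : ℝ) * uhat k)) ≠ ⊤ := by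
    intro htop
    apply hfin.ne
    rw [hQ h, hG, htop, EReal.coe_mul_top_of_pos hnpos, EReal.top_add_coe]
  set σ : ℝ := (∑ k, lconj ℓ ((S k).2) ((n : ℝ) * uhat k)).toReal with hσ
  have hScoe : (∑ k, lconj ℓ ((S k).2) ((n : ℝ) * uhat k)) = (σ : EReal) :=
    (EReal.coe_toReal hSnt hSnb).symm
  set g : ℝ := (n:ℝ)⁻¹ * σ with hg
  have hGcoe : G = (g : EReal) := by
    rw [hG, hScoe, ← EReal.coe_mul]
  set Qh : ℝ := ‖P‖ ^ 2 / (2 * lam) - ∑ k, uhat k * (⟪(S k).1, h⟫_ℝ) with hQh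
  set Qh' : ℝ := ‖P‖ ^ 2 / (2 * lam) - ∑ k, uhat k * (⟪(S k).1, h'⟫_ℝ) with hQh'
  -- the epsilon-minimality at the strong-dual point
  have hmin0 : g + Qh ≤ - regRisk ℓ lam S h wstar + ε := by
    have h1 := hmin u0
    rw [hu0, hQ h, hGcoe, ← EReal.coe_add, ← EReal.coe_add] at h1
    exact EReal.coe_le_coe_iff.1 h1
  -- weak duality at h'
  have hweak : ∀ w, - regRisk ℓ lam S h' w ≤ g + Qh' := by
    intro w
    have h1 := weak_duality ℓ lam hlam hn S h' uhat w
    rw [hQ h', hGcoe, ← EReal.coe_add] at h1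
    exact EReal.coe_le_coe_iff.1 h1
  -- difference of the affine parts
  have hQdiff : Qh - Qh' = (⟪P, h' - h⟫_ℝ) := by
    rw [hQh, hQh', inner_sub_right]
    have h1 : ∑ k, uhat k * (⟪(S k).1, h⟫_ℝ) = ⟪P, h⟫_ℝ := by
      rw [hPdef, sum_inner]
      exact Finset.sum_congr rfl fun k _ => (real_inner_smul_left _ _ _).symm
    have h2 : ∑ k, uhat k * (⟪(S k).1, h'⟫_ℝ) = ⟪P, h'⟫_ℝ := by
      rw [hPdef, sum_inner]
      exact Finset.sum_congr rfl fun k _ => (real_inner_smul_left _ _ _).symm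
    rw [h1, h2]
    ring
  -- pointwise lower bound for regRisk at h'
  have hpt : ∀ w, regRisk ℓ lam S h wstar + (⟪P, h' - h⟫_ℝ) - ε ≤ regRisk ℓ lam S h' w := by
    intro w
    have h1 := hweak w
    linarith [hmin0, h1, hQdiff.ge, hQdiff.le]
  have hbdd : BddBelow (Set.range fun w => regRisk ℓ lam S h w) := by
    refine ⟨0, ?_⟩
    rintro v ⟨w, rfl⟩
    exact regRisk_nonneg ℓ lam hlam S hℓdata h w
  have hInfh : (⨅ w : Vec d, regRisk ℓ lam S h w) ≤ regRisk ℓ lam S h wstar :=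
    ciInf_le hbdd wstar
  have hInfh' : regRisk ℓ lam S h wstar + (⟪P, h' - h⟫_ℝ) - ε
      ≤ ⨅ w : Vec d, regRisk ℓ lam S h' w :=
    le_ciInf hpt
  calc (⨅ w : Vec d, regRisk ℓ lam S h w) + (⟪P, h' - h⟫_ℝ) - ε
      ≤ regRisk ℓ lam S h wstar + (⟪P, h' - h⟫_ℝ) - ε := by linarith [hInfh]
    _ ≤ ⨅ w : Vec d, regRisk ℓ lam S h' w := hInfh'
end
end

section
/- (Dual decrease of the within-task algorithm.) Assume ‖x_k‖ ≤ R and ℓ(·, y_k) is L-Lipschitz for all k. Let (w^{(k)})_{k=1}^{n} and (u'_k)_{k=1}^{n} be the iterates and subgradients of Algorithm 1, and set ũ = (u'_1, …, u'_n) ∈ ℝ^n. Then Ψ_{h,n+1}(ũ) − inf_{u∈ℝ^n} Ψ_{h,n+1}(u) ≤ −( Σ_{k=1}^n ℓ_{k,h}(w^{(k)}) − inf_{w∈ℝ^d} Φ_{h,n+1}(w) ) + 2 R² L² (log n + 1)/λ, where ℓ_{k,h}(w) = ℓ(⟨x_k, w⟩, y_k) + (λ/2)‖w − h‖², Φ_{h,n+1}(w)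 = Σ_{k=1}^n ℓ(⟨x_k, w⟩, y_k) + (nλ/2)‖w − h‖², and Ψ_{h,n+1}(u) = Σ_{k=1}^n ℓ_k*(u_k) − ⟨h, X_nᵀ u⟩ + ‖X_nᵀ u‖²/(2 n λ). -/
open MeasureTheory Real
open scoped InnerProductSpace

noncomputable section

/-- The instantaneous dual objective
`Ψ_{h,n+1}(u) = Σ_k ℓ_k*(u_k) - ⟨h, X_nᵀ u⟩ + ‖X_nᵀ u‖²/(2nλ)`. -/
def dualObjN {d n : ℕ} (ℓ : ℝ → ℝ → ℝ) (lam : ℝ) (S : Fin n → Pt d)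
    (h : Vec d) (u : Fin n → ℝ) : EReal :=
  (∑ k, lconj ℓ ((S k).2) (u k))
    + ((‖∑ k, u k • (S k).1‖ ^ 2 / (2 * (n : ℝ) * lam)
        - (⟪h, ∑ k, u k • (S k).1⟫_ℝ) : ℝ) : EReal)

/-! ### Auxiliary lemmas -/

lemma harmonic_le_log' (n : ℕ) (hn : 1 ≤ n) :
    ∑ k ∈ Finset.range n, (1:ℝ)/(k+1) ≤ Real.log n + 1 := by
  induction n with
  | zero => simp at hn
  | succ m ih =>
    rcases Nat.eq_or_lt_of_le hn with h1 | h1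
    · simp [← h1]
    · have hm : 1 ≤ m := Nat.lt_succ_iff.mp h1
      have hmpos : (0:ℝ) < m := by exact_mod_cast hm
      rw [Finset.sum_range_succ]
      have key : (1:ℝ)/(m+1) ≤ Real.log (m+1) - Real.log m := by
        have h2 : Real.log ((m:ℝ)/(m+1)) ≤ (m:ℝ)/(m+1) - 1 :=
          Real.log_le_sub_one_of_pos (by positivity)
        rw [Real.log_div (ne_of_gt hmpos) (by positivity)] at h2
        have h3 : (m:ℝ)/(m+1) - 1 = -(1/(m+1)) := by field_simp; ring
        rw [h3] at h2
        linarith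
      have := ih hm
      push_cast
      linarith

lemma step_scalar' (k : ℕ) (lam C a b p : ℝ) (hlam : 0 < lam) (hC : 0 ≤ C)
    (ha0 : 0 ≤ a) (hb0 : 0 ≤ b) (ha : a ≤ C) (hb : b ≤ k * C)
    (hp : -(a*b) ≤ p) (hp2 : p ≤ a*b) :
    -(((k:ℝ)*lam)⁻¹ * p) + lam/2 * ((((k:ℝ)*lam)⁻¹)^2 * b^2)
      + (b^2 + 2*p + a^2)/(2*((k:ℝ)+1)*lam) - b^2/(2*(k:ℝ)*lam)
      ≤ 2*C^2/(((k:ℝ)+1)*lam) := by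
  rcases Nat.eq_zero_or_pos k with rfl | hk
  · have hb' : b = 0 := le_antisymm (by simpa using hb) hb0
    subst hb'
    have hp0 : p = 0 := le_antisymm (by simpa using hp2) (by simpa using hp)
    subst hp0
    simp only [Nat.cast_zero, zero_mul, inv_zero, mul_zero, neg_zero, zero_add,
      ne_eq, OfNat.ofNat_ne_zero, not_false_eq_true, zero_pow, mul_one, zero_div, sub_zero]
    rw [div_le_div_iff₀ (by positivity) (by positivity)]
    nlinarith [mul_le_mul ha ha ha0 hC, hlam.le]
  · have hK : (1:ℝ) ≤ (k:ℝ) := by exact_mod_cast hk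
    have hKpos : (0:ℝ) < k := by linarith
    rw [← sub_nonneg]
    have expand : 2*C^2/(((k:ℝ)+1)*lam)
        - (-(((k:ℝ)*lam)⁻¹ * p) + lam/2 * ((((k:ℝ)*lam)⁻¹)^2 * b^2)
          + (b^2 + 2*p + a^2)/(2*((k:ℝ)+1)*lam) - b^2/(2*(k:ℝ)*lam))
      = (4*C^2*(k:ℝ)^2 - (-2*p*(k:ℝ) + b^2 + (k:ℝ)^2*a^2)) / (2*(k:ℝ)^2*((k:ℝ)+1)*lam) := by
      field_simp
      ring
    rw [expand]
    apply div_nonneg _ (by positivity)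
    nlinarith [sq_nonneg ((k:ℝ)*a - b), mul_le_mul ha ha ha0 hC,
      mul_le_mul hb hb hb0 (by positivity : (0:ℝ) ≤ (k:ℝ)*C), sq_nonneg ((k:ℝ)*C)]

lemma step_vec' {d : ℕ} (k : ℕ) (lam C : ℝ) (hlam : 0 < lam) (hC : 0 ≤ C)
    (g s : Vec d) (hg : ‖g‖ ≤ C) (hs : ‖s‖ ≤ k * C) :
    ⟪g, -(((k:ℝ)*lam)⁻¹) • s⟫_ℝ + lam/2 * ‖-(((k:ℝ)*lam)⁻¹) • s‖^2
      + ‖s + g‖^2/(2*((k:ℝ)+1)*lam) - ‖s‖^2/(2*(k:ℝ)*lam)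
      ≤ 2*C^2/(((k:ℝ)+1)*lam) := by
  have h1 : ⟪g, -(((k:ℝ)*lam)⁻¹) • s⟫_ℝ = -(((k:ℝ)*lam)⁻¹ * ⟪g, s⟫_ℝ) := by
    rw [real_inner_smul_right]; ring
  have h2 : ‖-(((k:ℝ)*lam)⁻¹) • s‖^2 = (((k:ℝ)*lam)⁻¹)^2 * ‖s‖^2 := by
    rw [norm_smul]; simp [mul_pow, sq_abs]
  have h3 : ‖s + g‖^2 = ‖s‖^2 + 2*⟪g, s⟫_ℝ + ‖g‖^2 := by
    rw [norm_add_sq_real, real_inner_comm]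
  rw [h1, h2, h3]
  have hip := abs_real_inner_le_norm g s
  rw [abs_le] at hip
  exact step_scalar' k lam C ‖g‖ ‖s‖ ⟪g, s⟫_ℝ hlam hC (norm_nonneg _) (norm_nonneg _)
    hg hs (by nlinarith [hip.1]) hip.2

lemma ereal_coe_sum' {α : Type*} (s : Finset α) (f : α → ℝ) :
    ((∑ k ∈ s, f k : ℝ) : EReal) = ∑ k ∈ s, ((f k : ℝ) : EReal) :=
  map_sum (⟨⟨Real.toEReal, EReal.coe_zero⟩, EReal.coe_add⟩ : ℝ →+ EReal) f s

lemma lconj_eq' (ℓ : ℝ → ℝ → ℝ) (y u a : ℝ) (hsub : IsSubgradAt (fun b => ℓ b y) u a) :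
    lconj ℓ y u = ((u * a - ℓ a y : ℝ) : EReal) := by
  apply le_antisymm
  · apply iSup_le
    intro b
    have := hsub b
    exact EReal.coe_le_coe_iff.mpr (by simp only at this; nlinarith)
  · exact le_iSup (fun b => ((u * b - ℓ b y : ℝ) : EReal)) a

lemma lconj_ge' (ℓ : ℝ → ℝ → ℝ) (y u b : ℝ) :
    ((u * b - ℓ b y : ℝ) : EReal) ≤ lconj ℓ y u :=
  le_iSup (fun b => ((u * b - ℓ b y : ℝ) : EReal)) b

lemma ereal_le_of_forall' {d : ℕ} (x : EReal) (f : Vec d → ℝ)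
    (hx : ∀ w, ((-f w : ℝ) : EReal) ≤ x) :
    ((-(⨅ w, f w) : ℝ) : EReal) ≤ x := by
  by_cases htop : x = ⊤
  · simp [htop]
  have hbot : x ≠ ⊥ := by
    intro hb'
    have := hx 0
    simp [hb'] at this
  have hxe : x = ((x.toReal : ℝ) : EReal) := (EReal.coe_toReal htop hbot).symm
  rw [hxe, EReal.coe_le_coe_iff]
  have h2 : ∀ w, -f w ≤ x.toReal := fun w => by
    have := hx w; rw [hxe] at this; exact_mod_cast this
  have h3 : -x.toReal ≤ ⨅ w, f w := le_ciInf fun w => by linarith [h2 w]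
  linarith

set_option maxHeartbeats 1000000 in
/-- Dual decrease of the within-task algorithm:
`Ψ_{h,n+1}(ũ) - inf Ψ_{h,n+1} ≤ -(Σ_k ℓ_{k,h}(w^{(k)}) - inf Φ_{h,n+1})
  + 2R²L²(log n + 1)/λ`. -/
theorem stmt11
    (d n : ℕ) (hd : 1 ≤ d) (hn : 1 ≤ n)
    (R L lam : ℝ) (hR : 0 ≤ R) (hL : 0 ≤ L) (hlam : 0 < lam)
    (Y : Set ℝ) (ℓ : ℝ → ℝ → ℝ)
    (hℓ0 : ∀ a y, y ∈ Y → 0 ≤ ℓ a y)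
    (hℓconv : ∀ y ∈ Y, ConvexOn ℝ Set.univ fun a => ℓ a y)
    (hℓlip : ∀ y ∈ Y, ∀ a b, |ℓ a y - ℓ b y| ≤ L * |a - b|)
    (S : Fin n → Pt d) (hSY : ∀ k, (S k).2 ∈ Y)
    (hSR : ∀ k, ‖(S k).1‖ ≤ R)
    (h : Vec d)
    -- Algorithm 1: SGD on the biased regularized risk
    (W : ℕ → Vec d) (u' : Fin n → ℝ)
    (hW1 : W 1 = h)
    (hsub : ∀ k : Fin n,
      IsSubgradAt (fun a => ℓ a (S k).2) (u' k) (⟪(S k).1, W (k.1 + 1)⟫_ℝ))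
    (hrec : ∀ k : Fin n, W (k.1 + 2)
      = W (k.1 + 1) - (((k.1 + 1 : ℕ) : ℝ) * lam)⁻¹ •
          (u' k • (S k).1 + lam • (W (k.1 + 1) - h))) :
    dualObjN ℓ lam S h (fun k => u' k) - (⨅ u : Fin n → ℝ, dualObjN ℓ lam S h u)
      ≤ (((-((∑ k : Fin n, (ℓ (⟪(S k).1, W (k.1 + 1)⟫_ℝ) ((S k).2)
              + lam / 2 * ‖W (k.1 + 1) - h‖ ^ 2))
            - ⨅ w : Vec d, ((∑ k : Fin n, ℓ (⟪(S k).1, w⟫_ℝ) ((S k).2))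
                + (n : ℝ) * lam / 2 * ‖w - h‖ ^ 2)))
          + 2 * R ^ 2 * L ^ 2 * (Real.log n + 1) / lam : ℝ) : EReal) := by
  set C : ℝ := R * L with hCdef
  have hC : 0 ≤ C := mul_nonneg hR hL
  set g : ℕ → Vec d := fun j => if hj : j < n then u' ⟨j, hj⟩ • (S ⟨j, hj⟩).1 else 0 with hgdef
  set s : ℕ → Vec d := fun m => ∑ j ∈ Finset.range m, g j with hsdef
  set F : ℕ → ℝ := fun m => ‖s m‖^2/(2*(m:ℝ)*lam) with hFdef
  -- bound on the subgradients
  have huL : ∀ k : Fin n, |u' k| ≤ L := by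
    intro k
    set a := ⟪(S k).1, W (k.1 + 1)⟫_ℝ with hadef
    have hs1 := hsub k (a + 1)
    have hs2 := hsub k (a - 1)
    simp only at hs1 hs2
    have e1 : a + 1 - a = 1 := by ring
    have e2 : a - 1 - a = -1 := by ring
    rw [e1, mul_one] at hs1
    rw [e2] at hs2
    have hl1 := hℓlip _ (hSY k) (a + 1) a
    have hl2 := hℓlip _ (hSY k) (a - 1) a
    rw [e1, abs_one, mul_one, abs_le] at hl1
    rw [show a - 1 - a = -1 from e2] at hl2
    rw [show |(-1 : ℝ)| = 1 by norm_num, mul_one, abs_le] at hl2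
    rw [abs_le]
    constructor <;> nlinarith [hl1.2, hl2.2]
  have hgC : ∀ j, ‖g j‖ ≤ C := by
    intro j
    simp only [hgdef]
    by_cases hj : j < n
    · rw [dif_pos hj, norm_smul]
      calc ‖u' ⟨j, hj⟩‖ * ‖(S ⟨j, hj⟩).1‖ ≤ L * R := by
            exact mul_le_mul (huL _) (hSR _) (norm_nonneg _) hL
        _ = C := by rw [hCdef]; ring
    · rw [dif_neg hj]; simpa using hC
  have hsC : ∀ m : ℕ, ‖s m‖ ≤ m * C := by
    intro m
    simp only [hsdef]
    calc ‖∑ j ∈ Finset.range m, g j‖ ≤ ∑ j ∈ Finset.range m, ‖g j‖ := norm_sum_le _ _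
      _ ≤ ∑ _j ∈ Finset.range m, C := Finset.sum_le_sum fun j _ => hgC j
      _ = m * C := by simp [mul_comm]
  -- closed form for iterates
  have hcf : ∀ k, k ≤ n → W (k+1) - h = -((((k:ℕ):ℝ)*lam)⁻¹) • s k := by
    intro k
    induction k with
    | zero => intro _; simp [hW1, hsdef]
    | succ k ih =>
      intro hk1
      have hkn : k < n := hk1
      have ihh := ih (le_of_lt hkn)
      have hgk : g k = u' ⟨k, hkn⟩ • (S ⟨k, hkn⟩).1 := by
        simp only [hgdef]; exact dif_pos hkn
      have hr : W (k + 2) = W (k + 1) - (((k + 1 : ℕ) : ℝ) * lam)⁻¹ •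
          (g k + lam • (W (k + 1) - h)) := by
        rw [hgk]; exact hrec ⟨k, hkn⟩
      have hW : W (k+1) = -((((k:ℕ):ℝ)*lam)⁻¹) • s k + h := sub_eq_iff_eq_add.mp ihh
      have hss : s (k+1) = s k + g k := Finset.sum_range_succ g k
      rw [show k + 1 + 1 = k + 2 from rfl, hss, hr, hW]
      rcases Nat.eq_zero_or_pos k with rfl | hk0
      · have hs0 : s 0 = 0 := by simp [hsdef]
        rw [hs0]
        match_scalars <;> push_cast <;> norm_num
      · have hkR : (0:ℝ) < (k:ℝ) := by exact_mod_cast hk0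
        match_scalars <;> push_cast <;> field_simp <;> try ring
  -- per-step inequality
  have key : ∀ k ∈ Finset.range n,
      ⟪g k, W (k+1) - h⟫_ℝ + lam/2 * ‖W (k+1) - h‖^2 + (F (k+1) - F k)
        ≤ 2*C^2/lam * (1/((k:ℝ)+1)) := by
    intro k hk
    rw [Finset.mem_range] at hk
    rw [hcf k (le_of_lt hk)]
    have hss : s (k+1) = s k + g k := Finset.sum_range_succ g k
    have hFk1 : F (k+1) = ‖s k + g k‖^2/(2*((k:ℝ)+1)*lam) := by
      have e0 : F (k+1) = ‖s (k+1)‖^2/(2*((k+1:ℕ):ℝ)*lam) := rfl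
      rw [e0, hss]; push_cast; ring_nf
    have hFk : F k = ‖s k‖^2/(2*(k:ℝ)*lam) := rfl
    rw [hFk1, hFk]
    have hstep := step_vec' k lam C hlam hC (g k) (s k) (hgC k) (hsC k)
    have e : 2*C^2/lam * (1/((k:ℝ)+1)) = 2*C^2/(((k:ℝ)+1)*lam) := by
      rw [div_mul_div_comm, mul_one, mul_comm ((k:ℝ)+1) lam]
    rw [← e] at hstep
    linarith
  -- core SGD inequality
  have core : ∑ k ∈ Finset.range n, (⟪g k, W (k+1) - h⟫_ℝ + lam/2 * ‖W (k+1) - h‖^2)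
      + ‖s n‖^2/(2*(n:ℝ)*lam) ≤ 2*C^2/lam * (Real.log n + 1) := by
    have t1 := Finset.sum_le_sum key
    rw [Finset.sum_add_distrib, Finset.sum_range_sub F] at t1
    have hF0 : F 0 = 0 := by simp [hFdef, hsdef]
    have hFn : F n = ‖s n‖^2/(2*(n:ℝ)*lam) := rfl
    rw [hF0, hFn, sub_zero] at t1
    have t2 : ∑ k ∈ Finset.range n, 2*C^2/lam * (1/((k:ℝ)+1))
        ≤ 2*C^2/lam * (Real.log n + 1) := by
      rw [← Finset.mul_sum]
      exact mul_le_mul_of_nonneg_left (harmonic_le_log' n hn) (by positivity)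
    linarith
  -- Fenchel–Young equality at the iterates
  set v : Vec d := ∑ k : Fin n, u' k • (S k).1 with hvdef
  set P : ℝ := (∑ k : Fin n, (u' k * ⟪(S k).1, W (k.1+1)⟫_ℝ
      - ℓ (⟪(S k).1, W (k.1+1)⟫_ℝ) ((S k).2)))
      + (‖v‖^2/(2*(n:ℝ)*lam) - ⟪h, v⟫_ℝ) with hPdef
  have hPsi : dualObjN ℓ lam S h (fun k => u' k) = ((P : ℝ) : EReal) := by
    simp only [dualObjN]
    rw [← hvdef, hPdef, EReal.coe_add, ereal_coe_sum']
    congr 1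
    exact Finset.sum_congr rfl fun k _ => lconj_eq' ℓ ((S k).2) (u' k) _ (hsub k)
  -- weak duality
  have hwd : ∀ (u : Fin n → ℝ) (w : Vec d),
      ((-((∑ k : Fin n, ℓ (⟪(S k).1, w⟫_ℝ) ((S k).2))
          + (n : ℝ) * lam / 2 * ‖w - h‖ ^ 2) : ℝ) : EReal)
        ≤ dualObjN ℓ lam S h u := by
    intro u w
    simp only [dualObjN]
    set vu : Vec d := ∑ k : Fin n, u k • (S k).1 with hvudef
    have step1 : ((((∑ k : Fin n, (u k * ⟪(S k).1, w⟫_ℝ - ℓ (⟪(S k).1, w⟫_ℝ) ((S k).2)))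
        + (‖vu‖^2/(2*(n:ℝ)*lam) - ⟪h, vu⟫_ℝ)) : ℝ) : EReal)
        ≤ (∑ k : Fin n, lconj ℓ ((S k).2) (u k))
          + ((‖vu‖ ^ 2 / (2 * (n : ℝ) * lam) - ⟪h, vu⟫_ℝ : ℝ) : EReal) := by
      rw [EReal.coe_add, ereal_coe_sum']
      exact add_le_add (Finset.sum_le_sum fun k _ => lconj_ge' ℓ ((S k).2) (u k) _) le_rfl
    refine le_trans ?_ step1
    rw [EReal.coe_le_coe_iff]
    -- real-valued weak duality
    have hsum : ∑ k : Fin n, u k * ⟪(S k).1, w⟫_ℝ = ⟪vu, w⟫_ℝ := by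
      rw [hvudef, sum_inner]
      exact Finset.sum_congr rfl fun k _ => (real_inner_smul_left _ _ _).symm
    have hcomm : ⟪h, vu⟫_ℝ = ⟪vu, h⟫_ℝ := real_inner_comm _ _
    have hsub' : ⟪vu, w⟫_ℝ - ⟪vu, h⟫_ℝ = ⟪vu, w - h⟫_ℝ := (inner_sub_right _ _ _).symm
    have hip : -(‖vu‖ * ‖w - h‖) ≤ ⟪vu, w - h⟫_ℝ := by
      have := abs_real_inner_le_norm vu (w - h)
      rw [abs_le] at this
      linarith [this.1]
    have hamgm : ‖vu‖ * ‖w - h‖ ≤ ‖vu‖^2/(2*(n:ℝ)*lam) + (n:ℝ)*lam/2 * ‖w - h‖^2 := by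
      have hnpos : (0:ℝ) < (n:ℝ) := by exact_mod_cast hn
      rw [← sub_nonneg]
      have expand : ‖vu‖^2/(2*(n:ℝ)*lam) + (n:ℝ)*lam/2 * ‖w - h‖^2 - ‖vu‖ * ‖w - h‖
          = (‖vu‖ - (n:ℝ)*lam*‖w - h‖)^2 / (2*(n:ℝ)*lam) := by
        field_simp
        ring
      rw [expand]
      positivity
    rw [Finset.sum_sub_distrib, hsum, hcomm]
    nlinarith [hsub', hip, hamgm]
  -- lower bound on the infimum
  have hI : ((-(⨅ w : Vec d, ((∑ k : Fin n, ℓ (⟪(S k).1, w⟫_ℝ) ((S k).2))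
        + (n : ℝ) * lam / 2 * ‖w - h‖ ^ 2)) : ℝ) : EReal)
      ≤ ⨅ u : Fin n → ℝ, dualObjN ℓ lam S h u :=
    le_iInf fun u => ereal_le_of_forall' _ _ (fun w => hwd u w)
  -- main real bound : P ≤ -Σ ℓ_{k,h}(w^{(k)}) + 2R²L²(log n + 1)/λ
  have hgk : ∀ k : Fin n, g k.1 = u' k • (S k).1 := fun k => by
    simp only [hgdef]; exact dif_pos k.2
  have hvs : v = s n := by
    rw [hvdef]
    show ∑ k : Fin n, u' k • (S k).1 = ∑ j ∈ Finset.range n, g j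
    rw [← Fin.sum_univ_eq_sum_range g n]
    exact Finset.sum_congr rfl fun k _ => (hgk k).symm
  have hterm : ∀ k : Fin n, ⟪g k.1, W (k.1+1) - h⟫_ℝ
      = u' k * ⟪(S k).1, W (k.1+1)⟫_ℝ - u' k * ⟪(S k).1, h⟫_ℝ := by
    intro k
    rw [hgk k, real_inner_smul_left, inner_sub_right]
    ring
  have hinner : ⟪h, v⟫_ℝ = ∑ k : Fin n, u' k * ⟪(S k).1, h⟫_ℝ := by
    rw [hvdef, inner_sum]
    exact Finset.sum_congr rfl fun k _ => by
      rw [real_inner_smul_right, real_inner_comm]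
  have hQ : ∑ k ∈ Finset.range n, (⟪g k, W (k+1) - h⟫_ℝ + lam/2 * ‖W (k+1) - h‖^2)
      = (∑ k : Fin n, u' k * ⟪(S k).1, W (k.1+1)⟫_ℝ)
        - (∑ k : Fin n, u' k * ⟪(S k).1, h⟫_ℝ)
        + ∑ k : Fin n, lam/2 * ‖W (k.1+1) - h‖^2 := by
    rw [← Fin.sum_univ_eq_sum_range (fun j => ⟪g j, W (j+1) - h⟫_ℝ + lam/2 * ‖W (j+1) - h‖^2) n]
    rw [← Finset.sum_sub_distrib, ← Finset.sum_add_distrib]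
    exact Finset.sum_congr rfl fun k _ => by rw [hterm k]
  have hmain : P ≤ -(∑ k : Fin n, (ℓ (⟪(S k).1, W (k.1 + 1)⟫_ℝ) ((S k).2)
        + lam / 2 * ‖W (k.1 + 1) - h‖ ^ 2))
      + 2 * R ^ 2 * L ^ 2 * (Real.log n + 1) / lam := by
    have hBeq : 2*C^2/lam * (Real.log n + 1) = 2 * R ^ 2 * L ^ 2 * (Real.log n + 1) / lam := by
      rw [hCdef]; ring
    rw [hPdef, hinner, hvs]
    rw [Finset.sum_sub_distrib, Finset.sum_add_distrib]
    rw [hQ] at core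
    linarith [core, hBeq]
  -- conclude
  calc dualObjN ℓ lam S h (fun k => u' k) - (⨅ u : Fin n → ℝ, dualObjN ℓ lam S h u)
      ≤ ((P : ℝ) : EReal) - ((-(⨅ w : Vec d, ((∑ k : Fin n, ℓ (⟪(S k).1, w⟫_ℝ) ((S k).2))
          + (n : ℝ) * lam / 2 * ‖w - h‖ ^ 2)) : ℝ) : EReal) := by
        rw [hPsi]; exact EReal.sub_le_sub le_rfl hI
    _ ≤ _ := by
        rw [← EReal.coe_sub, EReal.coe_le_coe_iff]
        linarith [hmain]
end
end

section
/- (Dual accuracy of the last iterate.) Assume ‖x_k‖ ≤ R and ℓ(·, y_k) is L-Lipschitz for all k. Let (w^{(k)})_{k=1}^n and (u'_k)_{k=1}^n be the iterates and subgradients of Algorithm 1, and set û = (u'_1/n, …, u'_n/n) ∈ ℝ^n. Then for every w ∈ ℝ^d, û is an ε-minimizer of the dual objective Ψ_h, i.e. Ψ_h(û) ≤ inf_{u∈ℝ^n} Ψ_h(u) + ε, with ε = −( (1/n) Σ_{k=1}^n [ ℓ(⟨x_k, w^{(k)}⟩, y_k) + (λ/2)‖w^{(k)} − h‖² ] − R_{Z_n,h}(w)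 ) + 2 R² L² (log n + 1)/(λ n). -/
open MeasureTheory Real
open scoped InnerProductSpace

noncomputable section

section Aux

lemma coe_sum' {ι : Type*} (s : Finset ι) (f : ι → ℝ) :
    ((∑ i ∈ s, f i : ℝ) : EReal) = ∑ i ∈ s, ((f i : ℝ) : EReal) :=
  map_sum (⟨⟨Real.toEReal, EReal.coe_zero⟩, EReal.coe_add⟩ : ℝ →+ EReal) f s

lemma harmonic_le_log (m : ℕ) :
    ∑ j ∈ Finset.range m, ((j : ℝ) + 1)⁻¹ ≤ Real.log m + 1 := by
  induction m with
  | zero => simp [Real.log_zero]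
  | succ m ih =>
    rcases Nat.eq_zero_or_pos m with rfl | hm
    · simp
    rw [Finset.sum_range_succ]
    have hlog : ((m : ℝ) + 1)⁻¹ ≤ Real.log (m + 1) - Real.log m := by
      have hm0 : (0:ℝ) < m := by exact_mod_cast hm
      have hx : (0:ℝ) < (m : ℝ) / ((m:ℝ)+1) := by positivity
      have := Real.log_le_sub_one_of_pos hx
      rw [Real.log_div (ne_of_gt hm0) (by positivity)] at this
      have h1 : (m:ℝ)/((m:ℝ)+1) - 1 = -((m:ℝ)+1)⁻¹ := by field_simp; ring
      rw [h1] at this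
      linarith
    calc ∑ j ∈ Finset.range m, ((j : ℝ) + 1)⁻¹ + ((m:ℝ)+1)⁻¹
        ≤ Real.log m + 1 + ((m:ℝ)+1)⁻¹ := by linarith
      _ ≤ Real.log (m+1) + 1 := by linarith
      _ = Real.log ((m+1 : ℕ) : ℝ) + 1 := by norm_num

lemma lconj_of_subgrad_s13 (ℓ : ℝ → ℝ → ℝ) (y u a : ℝ)
    (hs : IsSubgradAt (fun b => ℓ b y) u a) :
    lconj ℓ y u = ((u * a - ℓ a y : ℝ) : EReal) := by
  refine le_antisymm (iSup_le fun b => ?_) (le_iSup (fun b => ((u * b - ℓ b y : ℝ) : EReal)) a)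
  have := hs b
  simp only at this
  exact_mod_cast EReal.coe_le_coe_iff.2 (by linarith)

lemma step_ineq (lam p F F' E D : ℝ) (hlam : 0 < lam) (hp : 1 ≤ p)
    (hF' : 0 ≤ F') (hD : 0 ≤ D) :
    -((p*lam)⁻¹) * ((F' - F - E)/2) + lam/2 * ((p*lam)⁻¹)^2 * F
      ≤ F*(p+1)/(2*lam*p^2) - F'*(p+2)/(2*lam*(p+1)^2) + (E+D)/(2*lam*p) := by
  have hp0 : (0:ℝ) < p := by linarith
  have key : F*(p+1)/(2*lam*p^2) - F'*(p+2)/(2*lam*(p+1)^2) + (E+D)/(2*lam*p)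
      - (-((p*lam)⁻¹) * ((F' - F - E)/2) + lam/2 * ((p*lam)⁻¹)^2 * F)
      = (F'/(p*(p+1)^2) + D/p)/(2*lam) := by
    field_simp
    ring
  nlinarith [div_nonneg (by positivity : (0:ℝ) ≤ F'/(p*(p+1)^2) + D/p)
    (by positivity : (0:ℝ) ≤ 2*lam)]

end Aux

set_option maxHeartbeats 2000000 in
/-- Dual accuracy of the last iterate: `û = (u'_1/n, …, u'_n/n)` is an
`ε`-minimizer of the dual objective `Ψ_h`, with
`ε = -((1/n) Σ_k ℓ_{k,h}(w^{(k)}) - R_{Z_n,h}(w)) + 2R²L²(log n + 1)/(λn)`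
for every `w`. -/
theorem stmt13
    (d n : ℕ) (hd : 1 ≤ d) (hn : 1 ≤ n)
    (R L lam : ℝ) (hR : 0 ≤ R) (hL : 0 ≤ L) (hlam : 0 < lam)
    (Y : Set ℝ) (ℓ : ℝ → ℝ → ℝ)
    (hℓ0 : ∀ a y, y ∈ Y → 0 ≤ ℓ a y)
    (hℓconv : ∀ y ∈ Y, ConvexOn ℝ Set.univ fun a => ℓ a y)
    (hℓlip : ∀ y ∈ Y, ∀ a b, |ℓ a y - ℓ b y| ≤ L * |a - b|)
    (S : Fin n → Pt d) (hSY : ∀ k, (S k).2 ∈ Y)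
    (hSR : ∀ k, ‖(S k).1‖ ≤ R)
    (h : Vec d)
    -- Algorithm 1: SGD on the biased regularized risk
    (W : ℕ → Vec d) (u' : Fin n → ℝ)
    (hW1 : W 1 = h)
    (hsub : ∀ k : Fin n,
      IsSubgradAt (fun a => ℓ a (S k).2) (u' k) (⟪(S k).1, W (k.1 + 1)⟫_ℝ))
    (hrec : ∀ k : Fin n, W (k.1 + 2)
      = W (k.1 + 1) - (((k.1 + 1 : ℕ) : ℝ) * lam)⁻¹ •
          (u' k • (S k).1 + lam • (W (k.1 + 1) - h))) :
    ∀ w : Vec d,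
      dualObj ℓ lam S h (fun k => u' k / n)
        ≤ (⨅ u : Fin n → ℝ, dualObj ℓ lam S h u)
          + (((-((n : ℝ)⁻¹ * ∑ k : Fin n, (ℓ (⟪(S k).1, W (k.1 + 1)⟫_ℝ) ((S k).2)
                  + lam / 2 * ‖W (k.1 + 1) - h‖ ^ 2)
                - regRisk ℓ lam S h w))
              + 2 * R ^ 2 * L ^ 2 * (Real.log n + 1) / (lam * n) : ℝ) : EReal) := by
  intro w
  set eps : ℝ := -((n : ℝ)⁻¹ * ∑ k : Fin n, (ℓ (⟪(S k).1, W (k.1 + 1)⟫_ℝ) ((S k).2)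
        + lam / 2 * ‖W (k.1 + 1) - h‖ ^ 2) - regRisk ℓ lam S h w)
      + 2 * R ^ 2 * L ^ 2 * (Real.log n + 1) / (lam * n) with heps
  have hn0 : (0:ℝ) < n := by exact_mod_cast hn
  have hn0' : (n:ℝ) ≠ 0 := ne_of_gt hn0
  -- subgradients are bounded by L
  have hu'le : ∀ k : Fin n, |u' k| ≤ L := by
    intro k
    set a := ⟪(S k).1, W (k.1+1)⟫_ℝ with ha
    rw [abs_le]
    constructor
    · have h1 := hsub k (a-1)
      have l1 := hℓlip _ (hSY k) (a-1) a
      have e : |a-1-a| = 1 := by rw [show a-1-a = (-1:ℝ) by ring]; norm_num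
      rw [e, mul_one] at l1
      have l2 := (abs_le.1 l1).2
      have hx : ℓ a (S k).2 + u' k * (a - 1 - a) = ℓ a (S k).2 - u' k := by ring
      simp only at h1
      rw [hx] at h1
      linarith
    · have h1 := hsub k (a+1)
      have l1 := hℓlip _ (hSY k) (a+1) a
      have e : |a+1-a| = 1 := by rw [show a+1-a = (1:ℝ) by ring]; norm_num
      rw [e, mul_one] at l1
      have l2 := (abs_le.1 l1).2
      have hx : ℓ a (S k).2 + u' k * (a + 1 - a) = ℓ a (S k).2 + u' k := by ring
      simp only at h1
      rw [hx] at h1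
      linarith
  -- increments and partial sums
  set T : ℕ → Vec d := fun i => if hi : i < n then u' ⟨i, hi⟩ • (S ⟨i, hi⟩).1 else 0 with hT
  set s : ℕ → Vec d := fun m => ∑ i ∈ Finset.range m, T i with hs
  have hTk : ∀ k : Fin n, T k.1 = u' k • (S k).1 := by
    intro k
    simp only [hT]
    rw [dif_pos k.2]
  have hTnorm : ∀ i, ‖T i‖ ≤ L * R := by
    intro i
    by_cases hi : i < n
    · simp only [hT, dif_pos hi]
      rw [norm_smul, Real.norm_eq_abs]
      exact mul_le_mul (hu'le _) (hSR _) (norm_nonneg _) hL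
    · simp only [hT, dif_neg hi, norm_zero]
      positivity
  -- closed form of the iterates
  have hW : ∀ m, m ≤ n → W (m+1) - h = -((((m:ℕ):ℝ)*lam)⁻¹ • s m) := by
    intro m
    induction m with
    | zero => intro _; simp [hW1, hs]
    | succ m ih =>
      intro hm
      have hm' : m < n := by omega
      have ihe := ih (le_of_lt hm')
      have hr := hrec ⟨m, hm'⟩
      simp only at hr
      have hTm : u' ⟨m,hm'⟩ • (S ⟨m,hm'⟩).1 = T m := by simp [hT, hm']
      have hsucc : s (m+1) = s m + T m := by simp [hs, Finset.sum_range_succ]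
      rw [hTm] at hr
      have ihe' : W (m+1) = h + -(((((m:ℕ):ℝ))*lam)⁻¹ • s m) := by
        rw [← ihe]; abel
      rw [hsucc, hr, ihe']
      push_cast
      rcases Nat.eq_zero_or_pos m with rfl | hm0
      · have hs0 : s 0 = 0 := by simp [hs]
        rw [hs0]
        push_cast
        match_scalars <;> field_simp <;> ring
      · have hm0' : ((m:ℕ):ℝ) ≠ 0 := by
          have : (0:ℝ) < m := by exact_mod_cast hm0
          linarith
        match_scalars <;> field_simp <;> ring
  set F : ℕ → ℝ := fun m => ‖s m‖^2 with hF
  have hFrec : ∀ m, F (m+1) = F m + 2 * ⟪T m, s m⟫_ℝ + ‖T m‖^2 := by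
    intro m
    have hsucc : s (m+1) = s m + T m := by simp [hs, Finset.sum_range_succ]
    simp only [hF, hsucc]
    rw [norm_add_sq_real, real_inner_comm]
    try ring
  set G : ℝ := (L*R)^2 with hG
  set Φ : ℕ → ℝ := fun j => F j * ((j:ℝ)+1)/(2*lam*(j:ℝ)^2) with hΦ
  set B : ℕ → ℝ := fun m => if m = 0 then G/lam else G/(2*lam*(m:ℝ)) with hB
  set term : ℕ → ℝ :=
    fun m => -(((m:ℝ)*lam)⁻¹ * ⟪T m, s m⟫_ℝ) + lam/2 * (((m:ℝ)*lam)⁻¹)^2 * F m with hterm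
  have hGnn : (0:ℝ) ≤ G := by positivity
  have hTG : ∀ i, ‖T i‖^2 ≤ G := by
    intro i
    rw [hG]
    exact pow_le_pow_left₀ (norm_nonneg _) (hTnorm i) 2
  have hstep : ∀ m, m < n → term m ≤ Φ m - Φ (m+1) + B m := by
    intro m hmn
    rcases Nat.eq_zero_or_pos m with rfl | hm0
    · have hs0 : s 0 = 0 := by simp [hs]
      have hterm0 : term 0 = 0 := by simp [hterm, hs0, hF]
      have hF1 : F 1 = ‖T 0‖^2 := by simp [hF, hs]
      have hΦ1 : Φ 1 = F 1 / lam := by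
        simp only [hΦ]
        push_cast
        field_simp
        ring
      have hΦ0' : Φ 0 = 0 := by simp [hΦ, hF, hs0]
      rw [hterm0, hΦ0', hΦ1, hF1]
      simp only [hB, if_pos rfl]
      have hdle : ‖T 0‖^2/lam ≤ G/lam := (div_le_div_iff_of_pos_right hlam).2 (hTG 0)
      linarith
    · have hm1 : (1:ℝ) ≤ (m:ℝ) := by exact_mod_cast hm0
      have hinner : ⟪T m, s m⟫_ℝ = (F (m+1) - F m - ‖T m‖^2)/2 := by
        have := hFrec m
        linarith
      have hFnn : (0:ℝ) ≤ F (m+1) := by simp only [hF]; positivity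
      have hst := step_ineq lam (m:ℝ) (F m) (F (m+1)) (‖T m‖^2) (G - ‖T m‖^2)
        hlam hm1 hFnn (by linarith [hTG m])
      have hBm : B m = G/(2*lam*(m:ℝ)) := by
        simp only [hB, if_neg (Nat.pos_iff_ne_zero.1 hm0)]
      have hΦm : Φ m = F m*((m:ℝ)+1)/(2*lam*(m:ℝ)^2) := rfl
      have hΦm1 : Φ (m+1) = F (m+1)*((m:ℝ)+2)/(2*lam*((m:ℝ)+1)^2) := by
        simp only [hΦ]
        push_cast
        ring_nf
      have hterme : term m = -(((m:ℝ)*lam)⁻¹ * ((F (m+1) - F m - ‖T m‖^2)/2))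
          + lam/2 * (((m:ℝ)*lam)⁻¹)^2 * F m := by
        simp only [hterm, hinner]
      rw [hterme, hBm, hΦm, hΦm1]
      have hEq : ‖T m‖^2 + (G - ‖T m‖^2) = G := by ring
      calc -(((m:ℝ)*lam)⁻¹ * ((F (m+1) - F m - ‖T m‖^2)/2))
            + lam/2 * (((m:ℝ)*lam)⁻¹)^2 * F m
          = -(((m:ℝ)*lam)⁻¹) * ((F (m+1) - F m - ‖T m‖^2)/2)
            + lam/2 * (((m:ℝ)*lam)⁻¹)^2 * F m := by ring
        _ ≤ F m*((m:ℝ)+1)/(2*lam*(m:ℝ)^2) - F (m+1)*((m:ℝ)+2)/(2*lam*((m:ℝ)+1)^2)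
            + (‖T m‖^2 + (G - ‖T m‖^2))/(2*lam*(m:ℝ)) := hst
        _ = F m*((m:ℝ)+1)/(2*lam*(m:ℝ)^2) - F (m+1)*((m:ℝ)+2)/(2*lam*((m:ℝ)+1)^2)
            + G/(2*lam*(m:ℝ)) := by rw [hEq]
  have htele : ∑ m ∈ Finset.range n, term m
      ≤ Φ 0 - Φ n + ∑ m ∈ Finset.range n, B m := by
    have h1 : ∑ m ∈ Finset.range n, term m
        ≤ ∑ m ∈ Finset.range n, ((Φ m - Φ (m+1)) + B m) :=
      Finset.sum_le_sum (fun m hm => hstep m (Finset.mem_range.1 hm))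
    have h2 : ∑ m ∈ Finset.range n, ((Φ m - Φ (m+1)) + B m)
        = Φ 0 - Φ n + ∑ m ∈ Finset.range n, B m := by
      rw [Finset.sum_add_distrib, Finset.sum_range_sub' Φ]
    exact h1.trans (le_of_eq h2)
  have hΦ0 : Φ 0 = 0 := by
    have hs0 : s 0 = 0 := by simp [hs]
    simp [hΦ, hF, hs0]
  have hΦn : F n/(2*lam*(n:ℝ)) ≤ Φ n := by
    have hFnn : (0:ℝ) ≤ F n := by simp only [hF]; positivity
    have : Φ n - F n/(2*lam*(n:ℝ)) = F n/(2*lam*(n:ℝ)^2) := by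
      simp only [hΦ]
      field_simp
      try ring
    nlinarith [div_nonneg hFnn (by positivity : (0:ℝ) ≤ 2*lam*(n:ℝ)^2)]
  have hBsum : ∑ m ∈ Finset.range n, B m ≤ G/lam + G/(2*lam)*(Real.log n + 1) := by
    obtain ⟨n', rfl⟩ : ∃ n', n = n' + 1 := ⟨n-1, by omega⟩
    rw [Finset.sum_range_succ']
    have hB0 : B 0 = G/lam := by simp [hB]
    have hBs : ∀ i : ℕ, B (i+1) = G/(2*lam) * ((i:ℝ)+1)⁻¹ := by
      intro i
      simp only [hB, if_neg (Nat.succ_ne_zero i)]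
      push_cast
      rw [div_mul_eq_div_div, div_eq_mul_inv]
    have h2 : ∑ i ∈ Finset.range n', B (i+1)
        = G/(2*lam) * ∑ i ∈ Finset.range n', ((i:ℝ)+1)⁻¹ := by
      rw [Finset.mul_sum]
      exact Finset.sum_congr rfl (fun i _ => hBs i)
    have h3 : ∑ i ∈ Finset.range n', ((i:ℝ)+1)⁻¹ ≤ Real.log n' + 1 := harmonic_le_log n'
    have h4 : Real.log n' ≤ Real.log (n'+1 : ℕ) := by
      rcases Nat.eq_zero_or_pos n' with rfl | hn'
      · norm_num
      · apply Real.log_le_log (by exact_mod_cast hn')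
        push_cast
        linarith
    have h5 : G/(2*lam) * ∑ i ∈ Finset.range n', ((i:ℝ)+1)⁻¹
        ≤ G/(2*lam) * (Real.log (n'+1 : ℕ) + 1) := by
      apply mul_le_mul_of_nonneg_left _ (by positivity)
      linarith
    rw [hB0, h2]
    linarith
  have hQ : ∑ m ∈ Finset.range n, term m + F n/(2*lam*(n:ℝ))
      ≤ 2*R^2*L^2*(Real.log n + 1)/lam := by
    have hlogn : (0:ℝ) ≤ Real.log n := Real.log_nonneg (by exact_mod_cast hn)
    have hgap : 2*R^2*L^2*(Real.log n + 1)/lam - (G/lam + G/(2*lam)*(Real.log n + 1))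
        = (G*(3*Real.log n + 1))/(2*lam) := by
      rw [hG]
      field_simp
      ring
    have hnn : (0:ℝ) ≤ (G*(3*Real.log n + 1))/(2*lam) := by positivity
    linarith
  -- the dual value at û is a real number
  have hsn : s n = ∑ k : Fin n, u' k • (S k).1 := by
    calc s n = ∑ i ∈ Finset.range n, T i := rfl
      _ = ∑ k : Fin n, T k.1 := (Fin.sum_univ_eq_sum_range (fun i => T i) n).symm
      _ = ∑ k : Fin n, u' k • (S k).1 := Finset.sum_congr rfl (fun k _ => hTk k)
  have hlc : ∀ k : Fin n, lconj ℓ ((S k).2) ((n:ℝ) * (u' k / n))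
      = ((u' k * ⟪(S k).1, W (k.1+1)⟫_ℝ
          - ℓ (⟪(S k).1, W (k.1+1)⟫_ℝ) ((S k).2) : ℝ) : EReal) := by
    intro k
    have he : (n:ℝ) * (u' k / n) = u' k := by field_simp
    rw [he]
    exact lconj_of_subgrad_s13 ℓ _ _ _ (hsub k)
  set Dval : ℝ := (n:ℝ)⁻¹ * (∑ k : Fin n, (u' k * ⟪(S k).1, W (k.1+1)⟫_ℝ
          - ℓ (⟪(S k).1, W (k.1+1)⟫_ℝ) ((S k).2)))
      + (‖∑ k : Fin n, (u' k / (n:ℝ)) • (S k).1‖^2/(2*lam)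
          - ∑ k : Fin n, (u' k / (n:ℝ)) * ⟪(S k).1, h⟫_ℝ) with hDval
  have hdual_val : dualObj ℓ lam S h (fun k => u' k / n) = ((Dval : ℝ) : EReal) := by
    simp only [dualObj]
    rw [Finset.sum_congr rfl (fun k (_ : k ∈ Finset.univ) => hlc k)]
    rw [← coe_sum', ← EReal.coe_mul, ← EReal.coe_add]
  -- weak duality
  have hweak : ∀ u : Fin n → ℝ,
      ((-(regRisk ℓ lam S h w) : ℝ) : EReal) ≤ dualObj ℓ lam S h u := by
    intro u
    have hble : ∀ k : Fin n,
        ((((n:ℝ) * u k) * ⟪(S k).1, w⟫_ℝ - ℓ (⟪(S k).1, w⟫_ℝ) ((S k).2) : ℝ) : EReal)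
          ≤ lconj ℓ ((S k).2) ((n:ℝ) * u k) :=
      fun k => le_iSup (fun b => ((((n:ℝ) * u k) * b - ℓ b ((S k).2) : ℝ) : EReal)) _
    have hsumle : ((∑ k : Fin n, (((n:ℝ) * u k) * ⟪(S k).1, w⟫_ℝ
          - ℓ (⟪(S k).1, w⟫_ℝ) ((S k).2)) : ℝ) : EReal)
        ≤ ∑ k : Fin n, lconj ℓ ((S k).2) ((n:ℝ) * u k) := by
      rw [coe_sum']
      exact Finset.sum_le_sum fun k _ => hble k
    have hmul : (((n:ℝ)⁻¹ : ℝ) : EReal) * ((∑ k : Fin n, (((n:ℝ) * u k) * ⟪(S k).1, w⟫_ℝ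
          - ℓ (⟪(S k).1, w⟫_ℝ) ((S k).2)) : ℝ) : EReal)
        ≤ (((n:ℝ)⁻¹ : ℝ) : EReal) * ∑ k : Fin n, lconj ℓ ((S k).2) ((n:ℝ) * u k) :=
      mul_le_mul_of_nonneg_left hsumle
        (by exact_mod_cast EReal.coe_nonneg.2 (inv_nonneg.2 hn0.le))
    have hv1 : ∑ k : Fin n, u k * ⟪(S k).1, w⟫_ℝ = ⟪∑ k : Fin n, u k • (S k).1, w⟫_ℝ := by
      rw [sum_inner]
      exact Finset.sum_congr rfl fun k _ => (real_inner_smul_left _ _ _).symm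
    have hv2 : ∑ k : Fin n, u k * ⟪(S k).1, h⟫_ℝ = ⟪∑ k : Fin n, u k • (S k).1, h⟫_ℝ := by
      rw [sum_inner]
      exact Finset.sum_congr rfl fun k _ => (real_inner_smul_left _ _ _).symm
    have hexpand : (n:ℝ)⁻¹ * (∑ k : Fin n, (((n:ℝ) * u k) * ⟪(S k).1, w⟫_ℝ
          - ℓ (⟪(S k).1, w⟫_ℝ) ((S k).2)))
        = ∑ k : Fin n, u k * ⟪(S k).1, w⟫_ℝ
          - (n:ℝ)⁻¹ * ∑ k : Fin n, ℓ (⟪(S k).1, w⟫_ℝ) ((S k).2) := by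
      have hterm' : ∀ k : Fin n, (n:ℝ)⁻¹ * (((n:ℝ) * u k) * ⟪(S k).1, w⟫_ℝ
            - ℓ (⟪(S k).1, w⟫_ℝ) ((S k).2))
          = u k * ⟪(S k).1, w⟫_ℝ - (n:ℝ)⁻¹ * ℓ (⟪(S k).1, w⟫_ℝ) ((S k).2) := by
        intro k
        field_simp
      rw [Finset.mul_sum, Finset.sum_congr rfl (fun k (_ : k ∈ Finset.univ) => hterm' k),
        Finset.sum_sub_distrib, ← Finset.mul_sum]
    have hkey : (0:ℝ) ≤ lam/2 * ‖lam⁻¹ • (∑ k : Fin n, u k • (S k).1) + (w - h)‖^2 := by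
      positivity
    have hexp2 : lam/2 * ‖lam⁻¹ • (∑ k : Fin n, u k • (S k).1) + (w - h)‖^2
        = ‖∑ k : Fin n, u k • (S k).1‖^2/(2*lam)
          + (⟪∑ k : Fin n, u k • (S k).1, w⟫_ℝ - ⟪∑ k : Fin n, u k • (S k).1, h⟫_ℝ)
          + lam/2 * ‖w - h‖^2 := by
      rw [norm_add_sq_real, norm_smul, real_inner_smul_left, Real.norm_eq_abs, mul_pow, sq_abs,
        inner_sub_right]
      field_simp
    have hrlow : -(regRisk ℓ lam S h w)
        ≤ (n:ℝ)⁻¹ * (∑ k : Fin n, (((n:ℝ) * u k) * ⟪(S k).1, w⟫_ℝ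
            - ℓ (⟪(S k).1, w⟫_ℝ) ((S k).2)))
          + (‖∑ k : Fin n, u k • (S k).1‖^2/(2*lam)
            - ∑ k : Fin n, u k * ⟪(S k).1, h⟫_ℝ) := by
      rw [hexpand, hv1, hv2]
      simp only [regRisk, empRisk]
      nlinarith [hkey, hexp2]
    calc ((-(regRisk ℓ lam S h w) : ℝ) : EReal)
        ≤ (((n:ℝ)⁻¹ * (∑ k : Fin n, (((n:ℝ) * u k) * ⟪(S k).1, w⟫_ℝ
              - ℓ (⟪(S k).1, w⟫_ℝ) ((S k).2)))
            + (‖∑ k : Fin n, u k • (S k).1‖^2/(2*lam)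
              - ∑ k : Fin n, u k * ⟪(S k).1, h⟫_ℝ) : ℝ) : EReal) :=
          EReal.coe_le_coe_iff.2 hrlow
      _ = (((n:ℝ)⁻¹ : ℝ) : EReal) * ((∑ k : Fin n, (((n:ℝ) * u k) * ⟪(S k).1, w⟫_ℝ
              - ℓ (⟪(S k).1, w⟫_ℝ) ((S k).2)) : ℝ) : EReal)
            + ((‖∑ k : Fin n, u k • (S k).1‖^2/(2*lam)
              - ∑ k : Fin n, u k * ⟪(S k).1, h⟫_ℝ : ℝ) : EReal) := by
          rw [← EReal.coe_mul, ← EReal.coe_add]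
      _ ≤ (((n:ℝ)⁻¹ : ℝ) : EReal) * (∑ k : Fin n, lconj ℓ ((S k).2) ((n:ℝ) * u k))
            + ((‖∑ k : Fin n, u k • (S k).1‖^2/(2*lam)
              - ∑ k : Fin n, u k * ⟪(S k).1, h⟫_ℝ : ℝ) : EReal) :=
          add_le_add_left hmul _
      _ = dualObj ℓ lam S h u := rfl
  -- the main real inequality
  have hreal : Dval ≤ -(regRisk ℓ lam S h w) + eps := by
    have hsm : ∑ k : Fin n, (u' k / (n:ℝ)) • (S k).1 = (n:ℝ)⁻¹ • s n := by
      rw [hsn, Finset.smul_sum]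
      exact Finset.sum_congr rfl fun k _ => by rw [div_eq_inv_mul, mul_smul]
    have e_norm : ‖∑ k : Fin n, (u' k / (n:ℝ)) • (S k).1‖^2/(2*lam)
        = (n:ℝ)⁻¹ * (F n/(2*lam*(n:ℝ))) := by
      rw [hsm, norm_smul, Real.norm_eq_abs, mul_pow, sq_abs]
      have : F n = ‖s n‖^2 := rfl
      rw [← this]
      ring
    have hsum_inner : ∑ k : Fin n, (u' k / (n:ℝ)) * ⟪(S k).1, h⟫_ℝ
        = (n:ℝ)⁻¹ * ∑ k : Fin n, u' k * ⟪(S k).1, h⟫_ℝ := by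
      rw [Finset.mul_sum]
      exact Finset.sum_congr rfl fun k _ => by rw [div_eq_inv_mul]; ring
    have hpt : ∀ k : Fin n,
        (u' k * ⟪(S k).1, W (k.1+1)⟫_ℝ - ℓ (⟪(S k).1, W (k.1+1)⟫_ℝ) ((S k).2))
          - u' k * ⟪(S k).1, h⟫_ℝ
          + (ℓ (⟪(S k).1, W (k.1+1)⟫_ℝ) ((S k).2) + lam / 2 * ‖W (k.1+1) - h‖^2)
        = term k.1 := by
      intro k
      have hWk := hW k.1 (le_of_lt k.2)
      have e1 : (u' k * ⟪(S k).1, W (k.1+1)⟫_ℝ - ℓ (⟪(S k).1, W (k.1+1)⟫_ℝ) ((S k).2))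
          - u' k * ⟪(S k).1, h⟫_ℝ
          + (ℓ (⟪(S k).1, W (k.1+1)⟫_ℝ) ((S k).2) + lam / 2 * ‖W (k.1+1) - h‖^2)
          = u' k * ⟪(S k).1, W (k.1+1) - h⟫_ℝ + lam / 2 * ‖W (k.1+1) - h‖^2 := by
        rw [inner_sub_right]
        ring
      rw [e1, hWk, inner_neg_right, real_inner_smul_right, norm_neg, norm_smul,
        Real.norm_eq_abs, mul_pow, sq_abs]
      have e2 : ⟪(S k).1, s k.1⟫_ℝ * u' k = ⟪T k.1, s k.1⟫_ℝ := by
        rw [hTk k, real_inner_smul_left]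
        ring
      have e3 : ‖s k.1‖^2 = F k.1 := rfl
      simp only [hterm]
      rw [← e2, ← e3]
      ring
    have hsplit : (∑ k : Fin n, (u' k * ⟪(S k).1, W (k.1+1)⟫_ℝ
            - ℓ (⟪(S k).1, W (k.1+1)⟫_ℝ) ((S k).2)))
          - (∑ k : Fin n, u' k * ⟪(S k).1, h⟫_ℝ)
          + (∑ k : Fin n, (ℓ (⟪(S k).1, W (k.1+1)⟫_ℝ) ((S k).2)
            + lam / 2 * ‖W (k.1+1) - h‖^2))
        = ∑ m ∈ Finset.range n, term m := by
      rw [← Finset.sum_sub_distrib, ← Finset.sum_add_distrib]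
      rw [Finset.sum_congr rfl (fun k (_ : k ∈ Finset.univ) => hpt k)]
      exact Fin.sum_univ_eq_sum_range term n
    have hrate : (n:ℝ)⁻¹ * (2*R^2*L^2*(Real.log n + 1)/lam)
        = 2 * R ^ 2 * L ^ 2 * (Real.log n + 1) / (lam * n) := by
      ring
    have hDA : Dval + (n : ℝ)⁻¹ * ∑ k : Fin n, (ℓ (⟪(S k).1, W (k.1 + 1)⟫_ℝ) ((S k).2)
          + lam / 2 * ‖W (k.1 + 1) - h‖ ^ 2)
        ≤ 2 * R ^ 2 * L ^ 2 * (Real.log n + 1) / (lam * n) := by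
      calc Dval + (n : ℝ)⁻¹ * ∑ k : Fin n, (ℓ (⟪(S k).1, W (k.1 + 1)⟫_ℝ) ((S k).2)
              + lam / 2 * ‖W (k.1 + 1) - h‖ ^ 2)
          = (n:ℝ)⁻¹ * (((∑ k : Fin n, (u' k * ⟪(S k).1, W (k.1+1)⟫_ℝ
                - ℓ (⟪(S k).1, W (k.1+1)⟫_ℝ) ((S k).2)))
              - (∑ k : Fin n, u' k * ⟪(S k).1, h⟫_ℝ)
              + (∑ k : Fin n, (ℓ (⟪(S k).1, W (k.1+1)⟫_ℝ) ((S k).2)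
                + lam / 2 * ‖W (k.1+1) - h‖^2)))
              + F n/(2*lam*(n:ℝ))) := by
            rw [hDval, e_norm, hsum_inner]
            ring
        _ = (n:ℝ)⁻¹ * ((∑ m ∈ Finset.range n, term m) + F n/(2*lam*(n:ℝ))) := by
            rw [hsplit]
        _ ≤ (n:ℝ)⁻¹ * (2*R^2*L^2*(Real.log n + 1)/lam) :=
            mul_le_mul_of_nonneg_left hQ (inv_nonneg.2 hn0.le)
        _ = 2 * R ^ 2 * L ^ 2 * (Real.log n + 1) / (lam * n) := hrate
    rw [heps]
    linarith
  calc dualObj ℓ lam S h (fun k => u' k / n) = ((Dval : ℝ) : EReal) := hdual_val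
    _ ≤ ((-(regRisk ℓ lam S h w) + eps : ℝ) : EReal) := EReal.coe_le_coe_iff.2 hreal
    _ = ((-(regRisk ℓ lam S h w) : ℝ) : EReal) + ((eps : ℝ) : EReal) := EReal.coe_add _ _
    _ ≤ _ := add_le_add_left (le_iInf hweak) _
end
end

section
/- (Boundedness of the SGD iterates.) Assume ‖x_k‖ ≤ R and ℓ(·, y_k) is L-Lipschitz for all k. Then the iterates of Algorithm 1 satisfy λ‖w^{(k)} − h‖ ≤ L R for every k = 1, …, n+1. -/
open MeasureTheory Real
open scoped InnerProductSpace

noncomputable section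

/-- Boundedness of the SGD iterates: `λ‖w^{(k)} - h‖ ≤ LR` for every
`k = 1, …, n+1`. -/
theorem stmt14
    (d n : ℕ) (hd : 1 ≤ d) (hn : 1 ≤ n)
    (R L lam : ℝ) (hR : 0 ≤ R) (hL : 0 ≤ L) (hlam : 0 < lam)
    (Y : Set ℝ) (ℓ : ℝ → ℝ → ℝ)
    (hℓ0 : ∀ a y, y ∈ Y → 0 ≤ ℓ a y)
    (hℓconv : ∀ y ∈ Y, ConvexOn ℝ Set.univ fun a => ℓ a y)
    (hℓlip : ∀ y ∈ Y, ∀ a b, |ℓ a y - ℓ b y| ≤ L * |a - b|)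
    (S : Fin n → Pt d) (hSY : ∀ k, (S k).2 ∈ Y)
    (hSR : ∀ k, ‖(S k).1‖ ≤ R)
    (h : Vec d)
    -- Algorithm 1: SGD on the biased regularized risk
    (W : ℕ → Vec d) (u' : Fin n → ℝ)
    (hW1 : W 1 = h)
    (hsub : ∀ k : Fin n,
      IsSubgradAt (fun a => ℓ a (S k).2) (u' k) (⟪(S k).1, W (k.1 + 1)⟫_ℝ))
    (hrec : ∀ k : Fin n, W (k.1 + 2)
      = W (k.1 + 1) - (((k.1 + 1 : ℕ) : ℝ) * lam)⁻¹ •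
          (u' k • (S k).1 + lam • (W (k.1 + 1) - h))) :
    ∀ k ∈ Finset.Icc 1 (n + 1), lam * ‖W k - h‖ ≤ L * R := by
  -- subgradient bound |u' k| ≤ L
  have hu : ∀ k : Fin n, |u' k| ≤ L := by
    intro k
    set a := ⟪(S k).1, W (k.1 + 1)⟫_ℝ with ha
    have h1 := hsub k (a + 1)
    have h2 := hsub k (a - 1)
    simp only at h1 h2
    have hl1 := abs_le.mp (hℓlip _ (hSY k) (a + 1) a)
    have hl2 := abs_le.mp (hℓlip _ (hSY k) (a - 1) a)
    have e1 : |a + 1 - a| = 1 := by norm_num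
    have e2 : |a - 1 - a| = 1 := by
      have : a - 1 - a = -1 := by ring
      rw [this]; norm_num
    rw [e1] at hl1
    rw [e2] at hl2
    rw [abs_le]
    constructor <;> [nlinarith [hl2.1, hl2.2]; nlinarith [hl1.1, hl1.2]]
  have key : ∀ k : ℕ, k ≤ n → lam * ‖W (k + 1) - h‖ ≤ L * R := by
    intro k
    induction k with
    | zero => intro _; simp [hW1]; positivity
    | succ m ih =>
      intro hm
      have hmn : m < n := hm
      have hBm : lam * ‖W (m + 1) - h‖ ≤ L * R := ih (le_of_lt hmn)
      set kk : Fin n := ⟨m, hmn⟩ with hkk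
      have hml : ((m : ℝ) + 1) ≠ 0 := by positivity
      have hl0 : lam ≠ 0 := ne_of_gt hlam
      have halg : W (m + 2) - h
          = ((m : ℝ) / ((m : ℝ) + 1)) • (W (m + 1) - h)
            - ((((m : ℝ) + 1) * lam)⁻¹ * u' kk) • (S kk).1 := by
        have hr := hrec kk
        simp only [hkk] at hr
        rw [hr]
        push_cast
        match_scalars <;> field_simp <;> ring
      have hnorm : ‖W (m + 2) - h‖
          ≤ ((m : ℝ) / ((m : ℝ) + 1)) * ‖W (m + 1) - h‖
            + (((m : ℝ) + 1) * lam)⁻¹ * (L * R) := by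
        rw [halg]
        refine (norm_sub_le _ _).trans ?_
        rw [norm_smul, norm_smul]
        gcongr ?_ + ?_
        · rw [Real.norm_eq_abs, abs_of_nonneg (by positivity)]
        · rw [Real.norm_eq_abs, abs_mul, abs_of_nonneg (by positivity)]
          have h1 : |u' kk| * ‖(S kk).1‖ ≤ L * R :=
            mul_le_mul (hu kk) (hSR kk) (norm_nonneg _) hL
          calc (((m:ℝ)+1)*lam)⁻¹ * |u' kk| * ‖(S kk).1‖
              = (((m:ℝ)+1)*lam)⁻¹ * (|u' kk| * ‖(S kk).1‖) := by ring
            _ ≤ (((m:ℝ)+1)*lam)⁻¹ * (L * R) := by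
                apply mul_le_mul_of_nonneg_left h1 (by positivity)
      have hpos : (0:ℝ) < (m : ℝ) + 1 := by positivity
      have := mul_le_mul_of_nonneg_left hnorm (le_of_lt hlam)
      calc lam * ‖W (m + 1 + 1) - h‖
          = lam * ‖W (m + 2) - h‖ := by norm_num
        _ ≤ lam * (((m : ℝ) / ((m : ℝ) + 1)) * ‖W (m + 1) - h‖
            + (((m : ℝ) + 1) * lam)⁻¹ * (L * R)) := this
        _ = ((m : ℝ) / ((m : ℝ) + 1)) * (lam * ‖W (m + 1) - h‖)
            + (1 / ((m : ℝ) + 1)) * (L * R) := by field_simp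
        _ ≤ ((m : ℝ) / ((m : ℝ) + 1)) * (L * R) + (1 / ((m : ℝ) + 1)) * (L * R) :=
            add_le_add (mul_le_mul_of_nonneg_left hBm (by positivity)) le_rfl
        _ = L * R := by field_simp
  intro k hk
  obtain ⟨hk1, hk2⟩ := Finset.mem_Icc.mp hk
  obtain ⟨j, rfl⟩ := Nat.exists_eq_add_of_le hk1
  rw [add_comm]
  exact key j (by omega)
end
end
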